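/- arXiv:2504.20555 — 7 statements merged into one kernel-verified Lean document; each statement's English description precedes it below -/
import Mathlib

section
/- If f⁻¹(y) ≤ (1-ε)·√(2y/ln y) for some ε ∈ (0,1) and arbitrarily large y, and φ(x) = x² ln x, then φ(f⁻¹(y))/y is bounded above, along those y, by a quantity tending to (1-ε)² < 1; consequently, if additionally φ(f⁻¹(y))/y → 1, the inequality f⁻¹(y) ≤ (1-ε)·√(2y/ln y) fails for all sufficiently large y. -/
open Filter Real

private lemma sq_log_mono {x b : ℝ} (hx : 0 ≤ x) (hxb : x ≤ b) (hb : 1 ≤ b) :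
    x ^ 2 * Real.log x ≤ b ^ 2 * Real.log b := by
  rcases le_or_gt x 1 with h | h
  · have h1 : x ^ 2 * Real.log x ≤ 0 :=
      mul_nonpos_of_nonneg_of_nonpos (by positivity) (Real.log_nonpos hx h)
    have h2 : 0 ≤ b ^ 2 * Real.log b :=
      mul_nonneg (by positivity) (Real.log_nonneg hb)
    linarith
  · exact mul_le_mul (by nlinarith) (Real.log_le_log (by linarith) hxb)
      (Real.log_nonneg (le_of_lt h)) (by positivity)

private lemma div_log_tendsto : Tendsto (fun y : ℝ => 2 * y / Real.log y) atTop atTop := by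
  have h0 : Tendsto (fun y : ℝ => Real.log y / y) atTop (nhds 0) :=
    Real.isLittleO_log_id_atTop.tendsto_div_nhds_zero
  have hpos : ∀ᶠ y : ℝ in atTop, Real.log y / y ∈ Set.Ioi (0:ℝ) := by
    filter_upwards [eventually_gt_atTop (1:ℝ)] with y hy
    exact div_pos (Real.log_pos hy) (by linarith)
  have h1 : Tendsto (fun y : ℝ => Real.log y / y) atTop (nhdsWithin 0 (Set.Ioi 0)) :=
    tendsto_nhdsWithin_of_tendsto_nhds_of_eventually_within _ h0 hpos
  have h2 : Tendsto (fun y : ℝ => (Real.log y / y)⁻¹) atTop atTop := h1.inv_tendsto_nhdsGT_zero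
  have h3 : Tendsto (fun y : ℝ => y / Real.log y) atTop atTop := by
    refine h2.congr fun y => ?_
    rw [inv_div]
  have h4 := h3.const_mul_atTop (two_pos)
  refine h4.congr fun y => ?_
  ring

theorem not_frequently_le (ε : ℝ) (hε : 0 < ε) (hε1 : ε < 1) (g : ℝ → ℝ)
    (hg : ∀ y, 0 ≤ g y)
    (hasymp : Tendsto (fun y => (g y) ^ 2 * Real.log (g y) / y) atTop (nhds 1)) :
    ¬ (∃ᶠ y in atTop, g y ≤ (1 - ε) * Real.sqrt (2 * y / Real.log y)) := by
  intro hfreq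
  set c : ℝ := 1 - ε with hc
  have hc0 : 0 < c := by linarith
  have hc1 : c < 1 := by linarith
  set S : Set ℝ := {y | g y ≤ c * Real.sqrt (2 * y / Real.log y)} with hS
  have hne : (atTop ⊓ 𝓟 S).NeBot := Filter.frequently_iff_neBot.mp hfreq
  set l := atTop ⊓ 𝓟 S with hl
  set G : ℝ → ℝ := fun y => c ^ 2 *
      (2 * Real.log c / Real.log y + Real.log 2 / Real.log y + 1
        - Real.log (Real.log y) / Real.log y) with hGdef
  -- limits
  have hinv : Tendsto (fun y : ℝ => (Real.log y)⁻¹) atTop (nhds 0) :=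
    tendsto_inv_atTop_zero.comp Real.tendsto_log_atTop
  have hloglog : Tendsto (fun y : ℝ => Real.log (Real.log y) / Real.log y) atTop (nhds 0) :=
    Real.isLittleO_log_id_atTop.tendsto_div_nhds_zero.comp Real.tendsto_log_atTop
  have hGlim : Tendsto G atTop (nhds (c ^ 2)) := by
    have h1 : Tendsto (fun y : ℝ => 2 * Real.log c / Real.log y) atTop (nhds 0) := by
      have := hinv.const_mul (2 * Real.log c)
      simpa [div_eq_mul_inv, mul_comm] using this
    have h2 : Tendsto (fun y : ℝ => Real.log 2 / Real.log y) atTop (nhds 0) := by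
      have := hinv.const_mul (Real.log 2)
      simpa [div_eq_mul_inv, mul_comm] using this
    have h3 : Tendsto (fun y : ℝ =>
        2 * Real.log c / Real.log y + Real.log 2 / Real.log y + 1
          - Real.log (Real.log y) / Real.log y) atTop (nhds (0 + 0 + 1 - 0)) :=
      ((h1.add h2).add tendsto_const_nhds).sub hloglog
    have h4 := h3.const_mul (c ^ 2)
    norm_num at h4
    simpa [hGdef] using h4
  -- bound eventually on atTop (for points of S)
  have hbound : ∀ᶠ y in atTop, y ∈ S → g y ^ 2 * Real.log (g y) / y ≤ G y := by
    filter_upwards [eventually_ge_atTop (Real.exp 1),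
      div_log_tendsto.eventually_ge_atTop (1 / c ^ 2), eventually_gt_atTop (0:ℝ)]
      with y hy1 hy2 hy0 hyS
    have hlog1 : (1:ℝ) ≤ Real.log y := by
      have := Real.log_le_log (Real.exp_pos 1) hy1
      simpa using this
    have hlogpos : 0 < Real.log y := by linarith
    have hupos : 0 < 2 * y / Real.log y := by positivity
    set b : ℝ := c * Real.sqrt (2 * y / Real.log y) with hb
    have hb1 : 1 ≤ b := by
      have h : 1 / c ≤ Real.sqrt (2 * y / Real.log y) := by
        rw [show (1:ℝ)/c = Real.sqrt ((1/c)^2) by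
          rw [Real.sqrt_sq (by positivity)]]
        apply Real.sqrt_le_sqrt
        calc (1/c)^2 = 1 / c^2 := by rw [div_pow]; norm_num
          _ ≤ 2 * y / Real.log y := hy2
      calc (1:ℝ) = c * (1 / c) := by field_simp
        _ ≤ b := by
            rw [hb]; exact mul_le_mul_of_nonneg_left h (le_of_lt hc0)
    have hmain : g y ^ 2 * Real.log (g y) ≤ b ^ 2 * Real.log b :=
      sq_log_mono (hg y) hyS hb1
    have hbsq : b ^ 2 = c ^ 2 * (2 * y / Real.log y) := by
      rw [hb, mul_pow, Real.sq_sqrt (le_of_lt hupos)]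
    have hlogb : Real.log b = Real.log c +
        (Real.log 2 + Real.log y - Real.log (Real.log y)) / 2 := by
      rw [hb, Real.log_mul (ne_of_gt hc0)
        (ne_of_gt (Real.sqrt_pos.mpr hupos)), Real.log_sqrt (le_of_lt hupos),
        Real.log_div (by positivity) (ne_of_gt hlogpos),
        Real.log_mul (by norm_num) (ne_of_gt hy0)]
    have heq : b ^ 2 * Real.log b / y = G y := by
      rw [hbsq, hlogb, hGdef]
      field_simp
      ring
    calc g y ^ 2 * Real.log (g y) / y ≤ b ^ 2 * Real.log b / y := by gcongr
      _ = G y := heq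
  -- conclude
  have t1 : Tendsto (fun y => (g y) ^ 2 * Real.log (g y) / y) l (nhds 1) :=
    hasymp.mono_left inf_le_left
  have t2 : Tendsto G l (nhds (c ^ 2)) := hGlim.mono_left inf_le_left
  have hev : ∀ᶠ y in l, g y ^ 2 * Real.log (g y) / y ≤ G y := by
    rw [hl, Filter.eventually_inf_principal]
    exact hbound
  have hle : (1:ℝ) ≤ c ^ 2 := le_of_tendsto_of_tendsto t1 t2 hev
  nlinarith
end

section
/- Let A be an n-state NFA remembering the last symbol, with state partition (Q_a)_{a ∈ Σ}, and suppose |Q_a| ≤ n/2 for every symbol a. Then the number of subsets reachable in the subset construction is at most 2^{n/2 + 1}, where the exponent n/2 + 1 is taken as a real number. -/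
private theorem my_ncard_biUnion_le {α β : Type*} (s : Finset α) (T : α → Set β) :
    (⋃ a ∈ s, T a).ncard ≤ ∑ a ∈ s, (T a).ncard := by
  classical
  induction s using Finset.induction with
  | empty => simp
  | @insert a s' h ih =>
    rw [Finset.sum_insert h]
    refine le_trans ?_ (Nat.add_le_add_left ih _)
    have : (⋃ x ∈ insert a s', T x) = T a ∪ ⋃ x ∈ s', T x := by
      simp [Set.biUnion_insert]
    rw [this]
    exact Set.ncard_union_le _ _

private theorem my_nonempty_powerset_card {Q : Type} [Fintype Q] (t : Set Q) :
    {S : Set Q | S ⊆ t ∧ S.Nonempty}.ncard ≤ 2 ^ t.ncard - 1 := by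
  classical
  have hinj : Function.Injective (fun S : Set Q => S.toFinset) := by
    intro a b h; simpa using congrArg (fun f : Finset Q => (f : Set Q)) h
  have h1 : {S : Set Q | S ⊆ t ∧ S.Nonempty}.ncard =
      ((fun S : Set Q => S.toFinset) '' {S | S ⊆ t ∧ S.Nonempty}).ncard :=
    (Set.ncard_image_of_injective _ hinj).symm
  rw [h1]
  have h2 : ((fun S : Set Q => S.toFinset) '' {S | S ⊆ t ∧ S.Nonempty}) ⊆
      ↑(t.toFinset.powerset.erase ∅) := by
    rintro x ⟨S, ⟨hS, hne⟩, rfl⟩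
    simp only [Finset.coe_erase, Set.mem_diff, Finset.mem_coe, Finset.mem_powerset]
    constructor
    · intro q hq; simp at hq ⊢; exact hS hq
    · simp only [Set.mem_singleton_iff]
      intro h
      exact hne.ne_empty (by simpa using congrArg (fun f : Finset Q => (f : Set Q)) h)
  calc _ ≤ (↑(t.toFinset.powerset.erase ∅) : Set (Finset Q)).ncard :=
        Set.ncard_le_ncard h2 (Finset.finite_toSet _)
    _ = (t.toFinset.powerset.erase ∅).card := Set.ncard_coe_finset _
    _ ≤ 2 ^ t.ncard - 1 := by
        rw [Finset.card_erase_of_mem (by simp), Finset.card_powerset]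
        simp [Set.ncard_eq_toFinset_card']

private theorem my_convex (k m : ℕ) (h : k ≤ m) : (2 ^ k - 1) * m ≤ (2 ^ m - 1) * k := by
  have L : ∀ m, k ≤ m → 2 ^ k * m + k ≤ 2 ^ m * k + m := by
    intro m hm
    induction m, hm using Nat.le_induction with
    | base => omega
    | succ m hm ih =>
      have h1 : 2 ^ k ≤ 2 ^ m * k + 1 := by
        rcases Nat.eq_zero_or_pos k with rfl | hk
        · simp
        · have h2 : 2 ^ k ≤ 2 ^ m := Nat.pow_le_pow_right (by norm_num) hm
          have h3 : 2 ^ m ≤ 2 ^ m * k := Nat.le_mul_of_pos_right _ hk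
          omega
      have hp : 2 ^ (m + 1) = 2 * 2 ^ m := by rw [pow_succ]; ring
      nlinarith [ih]
  have hL := L m h
  have h1 : 1 ≤ 2 ^ k := Nat.one_le_two_pow
  have h2 : 1 ≤ 2 ^ m := Nat.one_le_two_pow
  rw [Nat.sub_mul, Nat.sub_mul]
  omega

theorem reachable_subsets_bound_balanced (σ Q : Type) [Fintype σ] [Fintype Q]
    (A : NFA σ Q) (n : ℕ) (hn : n = Fintype.card Q)
    (Qa : σ → Set Q)
    (hdisj : ∀ a b, a ≠ b → Disjoint (Qa a) (Qa b))
    (hstep : ∀ q a, A.step q a ⊆ Qa a)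
    (hsize : ∀ a, ((Qa a).ncard : ℝ) ≤ (n : ℝ) / 2) :
    ({S : Set Q | ∃ w : List σ, A.eval w = S}.ncard : ℝ) ≤
      (2 : ℝ) ^ ((n : ℝ) / 2 + 1) := by
  classical
  set 𝒮 := {S : Set Q | ∃ w : List σ, A.eval w = S} with h𝒮
  set m := n / 2 with hm
  set k : σ → ℕ := fun a => (Qa a).ncard with hk
  -- each k a ≤ m
  have hkm : ∀ a, k a ≤ m := by
    intro a
    have h1 : (2 * k a : ℝ) ≤ n := by have := hsize a; simp only [hk]; linarith
    have h2 : 2 * k a ≤ n := by exact_mod_cast h1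
    omega
  -- sum of k a ≤ n
  have hsum : ∑ a : σ, k a ≤ n := by
    rw [hn]
    have he : ∀ a, k a = (Qa a).toFinset.card := fun a => Set.ncard_eq_toFinset_card' _
    calc ∑ a : σ, k a = ∑ a ∈ Finset.univ, (Qa a).toFinset.card := by
          exact Finset.sum_congr rfl fun a _ => he a
      _ = (Finset.univ.biUnion fun a => (Qa a).toFinset).card := by
          rw [Finset.card_biUnion]
          intro a _ b _ hab
          exact Set.disjoint_toFinset.2 (hdisj a b hab)
      _ ≤ Fintype.card Q := Finset.card_le_univ _
  -- structural: reachable sets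
  have hstruct : 𝒮 ⊆ {A.start} ∪ ({∅} ∪ ⋃ a : σ, {S : Set Q | S ⊆ Qa a ∧ S.Nonempty}) := by
    rintro S ⟨w, rfl⟩
    rcases w.eq_nil_or_concat with rfl | ⟨ys, a, rfl⟩
    · left; simp [NFA.eval_nil]
    · rw [List.concat_eq_append]
      have hsub : A.eval (ys ++ [a]) ⊆ Qa a := by
        rw [NFA.eval_append_singleton]
        intro q hq
        rw [NFA.mem_stepSet] at hq
        obtain ⟨p, _, hp⟩ := hq
        exact hstep p a hp
      by_cases hne : (A.eval (ys ++ [a])).Nonempty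
      · right; right; exact Set.mem_iUnion.2 ⟨a, hsub, hne⟩
      · right; left
        simp [Set.not_nonempty_iff_eq_empty.1 hne]
  -- counting bound
  have hcount : 𝒮.ncard ≤ 2 + ∑ a : σ, (2 ^ k a - 1) := by
    have h1 : 𝒮.ncard ≤
        ({A.start} ∪ ({∅} ∪ ⋃ a : σ, {S : Set Q | S ⊆ Qa a ∧ S.Nonempty}) : Set (Set Q)).ncard :=
      Set.ncard_le_ncard hstruct (Set.toFinite _)
    have h2 : (⋃ a : σ, {S : Set Q | S ⊆ Qa a ∧ S.Nonempty}).ncard ≤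
        ∑ a : σ, (2 ^ k a - 1) := by
      have he : (⋃ a : σ, {S : Set Q | S ⊆ Qa a ∧ S.Nonempty}) =
          ⋃ a ∈ Finset.univ, {S : Set Q | S ⊆ Qa a ∧ S.Nonempty} := by simp
      rw [he]
      refine le_trans (my_ncard_biUnion_le _ _) ?_
      exact Finset.sum_le_sum fun a _ => my_nonempty_powerset_card (Qa a)
    have hu1 := Set.ncard_union_le ({A.start} : Set (Set Q))
      ({∅} ∪ ⋃ a : σ, {S : Set Q | S ⊆ Qa a ∧ S.Nonempty})
    have hu2 := Set.ncard_union_le ({∅} : Set (Set Q))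
      (⋃ a : σ, {S : Set Q | S ⊆ Qa a ∧ S.Nonempty})
    rw [Set.ncard_singleton] at hu1 hu2
    omega
  -- combine to nat inequality
  have hA : 𝒮.ncard * m ≤ 2 * m + (2 ^ m - 1) * n := by
    calc 𝒮.ncard * m ≤ (2 + ∑ a : σ, (2 ^ k a - 1)) * m :=
          Nat.mul_le_mul_right m hcount
      _ = 2 * m + ∑ a : σ, (2 ^ k a - 1) * m := by rw [add_mul, Finset.sum_mul]
      _ ≤ 2 * m + ∑ a : σ, (2 ^ m - 1) * k a := by
          exact Nat.add_le_add_left (Finset.sum_le_sum fun a _ => my_convex _ _ (hkm a)) _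
      _ = 2 * m + (2 ^ m - 1) * ∑ a : σ, k a := by rw [Finset.mul_sum]
      _ ≤ 2 * m + (2 ^ m - 1) * n := Nat.add_le_add_left (Nat.mul_le_mul_left (2 ^ m - 1) hsum) _
  -- now the real part
  by_cases hm0 : m = 0
  · -- n ≤ 1, count ≤ 2
    have hc2 : 𝒮.ncard ≤ 2 := by
      have : ∀ a, k a = 0 := fun a => Nat.le_zero.1 (hm0 ▸ hkm a)
      have hz : ∑ a : σ, (2 ^ k a - 1) = 0 := by
        apply Finset.sum_eq_zero; intro a _; rw [this a]; rfl
      omega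
    have h1 : (𝒮.ncard : ℝ) ≤ 2 := by exact_mod_cast hc2
    refine h1.trans ?_
    calc (2 : ℝ) = (2 : ℝ) ^ (1 : ℝ) := (Real.rpow_one 2).symm
      _ ≤ (2 : ℝ) ^ ((n : ℝ) / 2 + 1) := by
          apply Real.rpow_le_rpow_of_exponent_le (by norm_num)
          have : (0 : ℝ) ≤ (n : ℝ) / 2 := by positivity
          linarith
  · have hm1 : 1 ≤ m := Nat.one_le_iff_ne_zero.2 hm0
    have h2m : (1 : ℝ) ≤ 2 ^ m := one_le_pow₀ (by norm_num : (1:ℝ) ≤ 2)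
    have hAR : (𝒮.ncard : ℝ) * m ≤ 2 * m + ((2 : ℝ) ^ m - 1) * n := by
      have := hA
      have hc : ((2 ^ m - 1 : ℕ) : ℝ) = (2 : ℝ) ^ m - 1 := by
        push_cast [Nat.one_le_two_pow]; ring
      calc (𝒮.ncard : ℝ) * m ≤ ((2 * m + (2 ^ m - 1) * n : ℕ) : ℝ) := by exact_mod_cast hA
        _ = 2 * m + ((2 : ℝ) ^ m - 1) * n := by push_cast [hc]; ring
    rcases Nat.even_or_odd n with ⟨r, hr⟩ | ⟨r, hr⟩
    · -- n = r + r, m = r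
      have hmr : m = r := by omega
      have hexp : (n : ℝ) / 2 + 1 = ((r + 1 : ℕ) : ℝ) := by
        have : (n : ℝ) = 2 * r := by exact_mod_cast (by omega : n = 2 * r)
        rw [this]; push_cast; ring
      rw [hexp, Real.rpow_natCast]
      have hr1 : 1 ≤ r := by omega
      have hrpos : (0 : ℝ) < r := by exact_mod_cast hr1
      have key : (𝒮.ncard : ℝ) * r ≤ (2 : ℝ) ^ (r + 1) * r := by
        have hn2r : (n : ℝ) = 2 * r := by exact_mod_cast (by omega : n = 2 * r)
        calc (𝒮.ncard : ℝ) * r = (𝒮.ncard : ℝ) * m := by rw [hmr]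
          _ ≤ 2 * m + ((2 : ℝ) ^ m - 1) * n := hAR
          _ = 2 * r + ((2 : ℝ) ^ r - 1) * (2 * r) := by rw [hmr, hn2r]
          _ = (2 : ℝ) ^ (r + 1) * r := by rw [pow_succ]; ring
      exact le_of_mul_le_mul_right key hrpos
    · -- n = 2r + 1, m = r
      have hmr : m = r := by omega
      have hr1 : 1 ≤ r := by omega
      have hrpos : (0 : ℝ) < r := by exact_mod_cast hr1
      have hsqrt : (1.4 : ℝ) ≤ Real.sqrt 2 := by
        nlinarith [Real.sq_sqrt (by norm_num : (0:ℝ) ≤ 2), Real.sqrt_nonneg 2]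
      have hexp : (2 : ℝ) ^ ((n : ℝ) / 2 + 1) = (2 : ℝ) ^ (r + 1) * Real.sqrt 2 := by
        have h1 : (n : ℝ) / 2 + 1 = ((r + 1 : ℕ) : ℝ) + (1 / 2 : ℝ) := by
          have : (n : ℝ) = 2 * r + 1 := by exact_mod_cast hr
          rw [this]; push_cast; ring
        rw [h1, Real.rpow_add (by norm_num), Real.rpow_natCast,
          ← Real.sqrt_eq_rpow]
      rw [hexp]
      have h2r : (2 : ℝ) ≤ 2 ^ r := by
        calc (2:ℝ) = 2 ^ 1 := (pow_one 2).symm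
          _ ≤ 2 ^ r := pow_le_pow_right₀ (by norm_num) hr1
      have key : (𝒮.ncard : ℝ) * r ≤ ((2 : ℝ) ^ (r + 1) * Real.sqrt 2) * r := by
        have hn2r : (n : ℝ) = 2 * r + 1 := by exact_mod_cast hr
        have step1 : (𝒮.ncard : ℝ) * r ≤ (2 * r + 1) * 2 ^ r - 1 := by
          calc (𝒮.ncard : ℝ) * r = (𝒮.ncard : ℝ) * m := by rw [hmr]
            _ ≤ 2 * m + ((2 : ℝ) ^ m - 1) * n := hAR
            _ = 2 * r + ((2 : ℝ) ^ r - 1) * (2 * r + 1) := by rw [hmr, hn2r]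
            _ = (2 * r + 1) * 2 ^ r - 1 := by ring
        refine step1.trans ?_
        have hrr : (1 : ℝ) ≤ r := by exact_mod_cast hr1
        rcases eq_or_lt_of_le hr1 with h1 | h2
        · subst h1
          norm_num
          nlinarith [hsqrt]
        · have hr2 : (2 : ℝ) ≤ r := by exact_mod_cast h2
          rw [pow_succ]
          nlinarith [mul_nonneg (sub_nonneg.2 hsqrt) (by positivity : (0:ℝ) ≤ 2 ^ r * r),
            mul_nonneg (sub_nonneg.2 hr2) (by positivity : (0:ℝ) ≤ (2:ℝ) ^ r),
            Real.sqrt_nonneg 2]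
      exact le_of_mul_le_mul_right key hrpos
end

section
/- Let A be an n-state NFA remembering the last symbol with state partition (Q_a), and let n_1 = max_a |Q_a| with n_1 > n/2. Then the number of subsets reachable in the subset construction is at most 2^{n_1} + 2^{n - n_1} + 1, which is at most 2^{n_1 + 1}. -/
lemma ncard_powerset {Q : Type} [Fintype Q] (s : Set Q) :
    (𝒫 s).ncard = 2 ^ s.ncard := by
  classical
  rw [← Nat.card_coe_set_eq, Nat.card_congr (Equiv.Set.powerset s)]
  rw [Nat.card_eq_fintype_card, ← Nat.card_coe_set_eq, Nat.card_eq_fintype_card]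
  exact Fintype.card_set

theorem reachable_subsets_bound_dominant (σ Q : Type) [Fintype σ] [Fintype Q]
    (A : NFA σ Q) (n : ℕ) (hn : n = Fintype.card Q)
    (Qa : σ → Set Q)
    (hdisj : ∀ a b, a ≠ b → Disjoint (Qa a) (Qa b))
    (hstep : ∀ q a, A.step q a ⊆ Qa a)
    (n₁ : ℕ) (hmax : ∀ a, (Qa a).ncard ≤ n₁) (hatt : ∃ a, (Qa a).ncard = n₁)
    (hbig : n < 2 * n₁) :
    {S : Set Q | ∃ w : List σ, A.eval w = S}.ncard ≤ 2 ^ n₁ + 2 ^ (n - n₁) + 1 ∧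
      2 ^ n₁ + 2 ^ (n - n₁) + 1 ≤ 2 ^ (n₁ + 1) := by
  obtain ⟨a₀, ha₀⟩ := hatt
  have hn₁pos : 1 ≤ n₁ := by
    by_contra h
    push_neg at h
    interval_cases n₁; omega
  -- complement cardinality
  have hcompl : ((Qa a₀)ᶜ).ncard = n - n₁ := by
    have h := Set.ncard_add_ncard_compl (Qa a₀)
    rw [Nat.card_eq_fintype_card] at h
    omega
  -- reachable sets are contained in the union
  have hsub : {S : Set Q | ∃ w : List σ, A.eval w = S} ⊆
      insert A.start (𝒫 (Qa a₀) ∪ 𝒫 ((Qa a₀)ᶜ)) := by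
    rintro S ⟨w, rfl⟩
    rcases List.eq_nil_or_concat w with rfl | ⟨w', a, rfl⟩
    · exact Set.mem_insert _ _
    · right
      rw [List.concat_eq_append, NFA.eval_append_singleton]
      have hsubQa : A.stepSet (A.eval w') a ⊆ Qa a := by
        intro q hq
        rw [NFA.mem_stepSet] at hq
        obtain ⟨p, _, hp⟩ := hq
        exact hstep p a hp
      by_cases hb : a = a₀
      · left; subst hb; exact hsubQa
      · right
        exact fun q hq => (hdisj a a₀ hb).subset_compl_right (hsubQa hq)
  constructor
  · calc {S : Set Q | ∃ w : List σ, A.eval w = S}.ncard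
        ≤ (insert A.start (𝒫 (Qa a₀) ∪ 𝒫 ((Qa a₀)ᶜ))).ncard :=
          Set.ncard_le_ncard hsub (Set.toFinite _)
      _ ≤ (𝒫 (Qa a₀) ∪ 𝒫 ((Qa a₀)ᶜ)).ncard + 1 := Set.ncard_insert_le _ _
      _ ≤ (𝒫 (Qa a₀)).ncard + (𝒫 ((Qa a₀)ᶜ)).ncard + 1 := by
          have := Set.ncard_union_le (𝒫 (Qa a₀)) (𝒫 ((Qa a₀)ᶜ))
          omega
      _ = 2 ^ n₁ + 2 ^ (n - n₁) + 1 := by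
          rw [ncard_powerset, ncard_powerset, ha₀, hcompl]
  · have h1 : n - n₁ ≤ n₁ - 1 := by omega
    have h2 : 2 ^ (n - n₁) ≤ 2 ^ (n₁ - 1) := Nat.pow_le_pow_right (by norm_num) h1
    have h3 : 1 ≤ 2 ^ (n₁ - 1) := Nat.one_le_two_pow
    have h4 : 2 ^ (n₁ - 1) + 2 ^ (n₁ - 1) = 2 ^ n₁ := by
      rw [← two_mul, ← pow_succ']
      congr 1
      omega
    have h5 : 2 ^ (n₁ + 1) = 2 ^ n₁ + 2 ^ n₁ := by ring
    omega
end

section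
/- For the NFA A_{π_1,...,π_k} (with pairwise coprime cycle lengths π_1 = 3, π_2, ..., π_k ≥ 3), every subset of the form P_1 ∪ ... ∪ P_k with ∅ ⊊ P_i ⊊ Q_i for all i is reachable from the initial subset {q̂} in the subset construction. -/
/-!
Induction on `∑ i, |P i|`. If every `P i` is a singleton `{q_{i,p i}}`, the word `a^(t+1)` with
`t ≡ p i (mod π i)` for all `i` (Chinese remainder theorem) reaches it. Otherwise pick in each `P i`
a state whose successor on the cycle is not in `P i`; rotating all cycles by a common `t` (again by
the CRT) moves these states to `q_{i,0}`, so that `q_{i,1} ∉ P i`, and `a^t` undoes the rotation.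
For such a family, `b a` maps the predecessors `C i` of `P i \ {q_{i,0}}`, together with `q_{i,0}`
in every cycle except one cycle `i₂` where `|P i₂| ≥ 2`, onto `P`: `b` sends `q_{i,j}` to `r_{i,j}`
and `q_{i,0}` to `q̂`, then `a` sends `r_{i,j}` to `q_{i,j+1}` and `q̂` to every `q_{i,0}`. The
family `C` is smaller, nonempty and proper in each cycle, so induction applies.
-/

/-- States of the NFA `A_{π_1,...,π_k}`: the initial state `q̂`, the cycle states
`q_{i,j}` (for `j < π i`), and the auxiliary states `r_{i,j}` (of which only those
with `1 ≤ j ≤ π i - 2` are used; the others have no transitions). -/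
abbrev CycleState (k : ℕ) (π : Fin k → ℕ) : Type :=
  Unit ⊕ (Σ i : Fin k, Fin (π i)) ⊕ (Σ i : Fin k, Fin (π i))

/-- The NFA `A_{π_1,...,π_k}` over the alphabet `Bool`, where `true` is the
symbol `a` and `false` is the symbol `b`. -/
def cycleNFA (k : ℕ) (π : Fin k → ℕ) (hπ : ∀ i, 0 < π i) :
    NFA Bool (CycleState k π) where
  start := {Sum.inl ()}
  accept := {Sum.inl ()}
  step := fun s c =>
    match s, c with
    | Sum.inl _, true => Set.range fun i : Fin k => Sum.inr (Sum.inl ⟨i, ⟨0, hπ i⟩⟩)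
    | Sum.inl _, false => ∅
    | Sum.inr (Sum.inl ⟨i, j⟩), true =>
        {Sum.inr (Sum.inl ⟨i, ⟨(j.val + 1) % π i, Nat.mod_lt _ (hπ i)⟩⟩)}
    | Sum.inr (Sum.inl ⟨i, j⟩), false =>
        if j.val = 0 then {Sum.inl ()}
        else if j.val ≤ π i - 2 then {Sum.inr (Sum.inr ⟨i, j⟩)} else ∅
    | Sum.inr (Sum.inr ⟨i, j⟩), true =>
        if 1 ≤ j.val ∧ j.val ≤ π i - 2 then
          {Sum.inr (Sum.inl ⟨i, ⟨(j.val + 1) % π i, Nat.mod_lt _ (hπ i)⟩⟩)}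
        else ∅
    | Sum.inr (Sum.inr _), false => ∅

/-- The subset of states corresponding to `P_1 ∪ ... ∪ P_k`, where `P_i ⊆ Q_i`. -/
def cycleSubset (k : ℕ) (π : Fin k → ℕ) (P : ∀ i : Fin k, Set (Fin (π i))) :
    Set (CycleState k π) :=
  {s | ∃ (i : Fin k) (j : Fin (π i)), j ∈ P i ∧ s = Sum.inr (Sum.inl ⟨i, j⟩)}

namespace NFA

variable {α σ : Type*}

def IsReachable (M : NFA α σ) (S : Set σ) : Prop :=
  ∃ w, M.eval w = S

lemma IsReachable.evalFrom {M : NFA α σ} {S : Set σ} (h : M.IsReachable S) (w : List α) :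
    M.IsReachable (M.evalFrom S w) := by
  obtain ⟨w₀, rfl⟩ := h
  exact ⟨w₀ ++ w, evalFrom_append _ _ _ _⟩

end NFA

open Function in
lemma Nat.exists_forall_mod_eq {ι : Type*} [Fintype ι] {m : ι → ℕ} (hm : ∀ i, m i ≠ 0)
    (hcop : Pairwise (Nat.Coprime on m)) (r : ∀ i, Fin (m i)) :
    ∃ t, ∀ i, t % m i = r i := by
  obtain ⟨t, ht⟩ := Nat.chineseRemainderOfFinset (fun i => (r i).val) m Finset.univ
    (fun i _ => hm i) (fun i _ j _ hij => hcop hij)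
  refine ⟨t, fun i => ?_⟩
  have := ht i (Finset.mem_univ i)
  rwa [Nat.ModEq, Nat.mod_eq_of_lt (r i).isLt] at this

namespace CycleNFA

section Shift

variable {n : ℕ} (hn : 0 < n)

def shift (m : ℕ) (j : Fin n) : Fin n :=
  ⟨(j + m) % n, Nat.mod_lt _ hn⟩

@[simp]
lemma shift_val (m : ℕ) (j : Fin n) : (shift hn m j).val = (j + m) % n := rfl

lemma shift_zero (j : Fin n) : shift hn 0 j = j :=
  Fin.ext (by simp [Nat.mod_eq_of_lt j.isLt])

lemma shift_shift (m m' : ℕ) (j : Fin n) : shift hn m' (shift hn m j) = shift hn (m + m') j :=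
  Fin.ext (by simp [Nat.mod_add_mod, Nat.add_assoc])

lemma shift_bijective (m : ℕ) : Function.Bijective (shift hn m) := by
  refine Finite.injective_iff_bijective.mp fun a b h => Fin.ext ?_
  have h' : a.val % n = b.val % n := Nat.ModEq.add_right_cancel' m (congrArg Fin.val h)
  rwa [Nat.mod_eq_of_lt a.isLt, Nat.mod_eq_of_lt b.isLt] at h'

lemma ncard_preimage_shift (m : ℕ) (S : Set (Fin n)) : (shift hn m ⁻¹' S).ncard = S.ncard :=
  Set.ncard_preimage_of_injective_subset_range (shift_bijective hn m).injective
    (by simp [(shift_bijective hn m).surjective.range_eq])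

lemma exists_mem_shift_one_notMem {S : Set (Fin n)} (hne : S.Nonempty) (hS : S ≠ Set.univ) :
    ∃ p ∈ S, shift hn 1 p ∉ S := by
  by_contra! hclosed
  obtain ⟨p, hp⟩ := hne
  have hshift : ∀ m : ℕ, shift hn m p ∈ S := by
    intro m
    induction m with
    | zero => rwa [shift_zero]
    | succ m ih => simpa [shift_shift] using hclosed _ ih
  refine hS (Set.eq_univ_of_forall fun q => ?_)
  convert hshift (n - p + q) using 1
  apply Fin.ext
  have : p + (n - p + q) = q + n := by omega
  simp [this, Nat.mod_eq_of_lt q.isLt]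

end Shift

section Predecessors

variable {n : ℕ} (hn : 0 < n)

def predecessors (S : Set (Fin n)) : Set (Fin n) :=
  shift hn 1 ⁻¹' (S \ {⟨0, hn⟩})

variable {hn} {S : Set (Fin n)}

lemma val_mem_predecessors (h1 : shift hn 1 ⟨0, hn⟩ ∉ S) {j : Fin n}
    (hj : j ∈ predecessors hn S) : 1 ≤ j.val ∧ j.val ≤ n - 2 := by
  obtain ⟨hjS, hj0⟩ := hj
  have hj1 : j.val ≠ 0 := fun h => h1 (by rwa [show j = ⟨0, hn⟩ from Fin.ext h] at hjS)
  have hjn : j.val + 1 ≠ n := fun h => hj0 (Fin.ext (by simp [h]))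
  have := j.isLt
  omega

lemma insert_zero_image_shift_predecessors (h0 : ⟨0, hn⟩ ∈ S) :
    insert ⟨0, hn⟩ (shift hn 1 '' predecessors hn S) = S := by
  rw [predecessors, Set.image_preimage_eq _ (shift_bijective hn 1).surjective,
    Set.insert_sdiff_singleton, Set.insert_eq_of_mem h0]

lemma ncard_predecessors_add_one (h0 : ⟨0, hn⟩ ∈ S) :
    (predecessors hn S).ncard + 1 = S.ncard := by
  rw [predecessors, ncard_preimage_shift, Set.ncard_sdiff_singleton_add_one h0]

lemma insert_zero_predecessors_ne_univ (h0 : ⟨0, hn⟩ ∈ S) (h1 : shift hn 1 ⟨0, hn⟩ ∉ S) :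
    insert ⟨0, hn⟩ (predecessors hn S) ≠ Set.univ := by
  have hn1 : n ≠ 1 := by
    rintro rfl
    exact h1 (by convert h0)
  intro h
  have hlast : (⟨n - 1, by omega⟩ : Fin n) ∈ insert ⟨0, hn⟩ (predecessors hn S) := h ▸ trivial
  rcases hlast with hlast | hlast
  · have := Fin.mk.inj_iff.mp hlast
    omega
  · have := (val_mem_predecessors h1 hlast).2
    simp only at this
    omega

end Predecessors

section Automaton

variable {k : ℕ} {π : Fin k → ℕ} (hπ : ∀ i, 0 < π i)

-- The states `r_{i,j}` with `j ∈ R i`.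
def auxSubset (R : ∀ i : Fin k, Set (Fin (π i))) : Set (CycleState k π) :=
  {s | ∃ (i : Fin k) (j : Fin (π i)), j ∈ R i ∧ s = Sum.inr (Sum.inr ⟨i, j⟩)}

lemma stepSet_cycleSubset_true (P : ∀ i : Fin k, Set (Fin (π i))) :
    (cycleNFA k π hπ).stepSet (cycleSubset k π P) true
      = cycleSubset k π (fun i => shift (hπ i) 1 '' P i) := by
  ext s
  simp only [NFA.mem_stepSet, cycleSubset, Set.mem_ofPred_eq]
  constructor
  · rintro ⟨t, ⟨i, j, hj, rfl⟩, rfl⟩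
    exact ⟨i, _, ⟨j, hj, rfl⟩, rfl⟩
  · rintro ⟨i, _, ⟨j, hj, rfl⟩, rfl⟩
    exact ⟨_, ⟨i, j, hj, rfl⟩, rfl⟩

lemma evalFrom_cycleSubset_replicate_true (P : ∀ i : Fin k, Set (Fin (π i))) (t : ℕ) :
    (cycleNFA k π hπ).evalFrom (cycleSubset k π P) (List.replicate t true)
      = cycleSubset k π (fun i => shift (hπ i) t '' P i) := by
  induction t generalizing P with
  | zero => simp [shift_zero]
  | succ t ih =>
    simp only [List.replicate_succ, NFA.evalFrom_cons, stepSet_cycleSubset_true, ih,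
      Set.image_image, shift_shift, Nat.add_comm 1 t]

lemma stepSet_start_true :
    (cycleNFA k π hπ).stepSet {Sum.inl ()} true = cycleSubset k π (fun i => {⟨0, hπ i⟩}) := by
  ext s
  simp only [NFA.stepSet_singleton, cycleSubset, Set.mem_singleton_iff]
  constructor
  · rintro ⟨i, rfl⟩
    exact ⟨i, _, rfl, rfl⟩
  · rintro ⟨i, _, rfl, rfl⟩
    exact ⟨i, rfl⟩

lemma stepSet_cycleSubset_false (C : ∀ i : Fin k, Set (Fin (π i)))
    (hC : ∀ i, ∀ j ∈ C i, j.val ≤ π i - 2) (h0 : ∃ i, ⟨0, hπ i⟩ ∈ C i) :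
    (cycleNFA k π hπ).stepSet (cycleSubset k π C) false
      = insert (Sum.inl ()) (auxSubset (fun i => C i \ {⟨0, hπ i⟩})) := by
  ext s
  simp only [NFA.mem_stepSet, Set.mem_insert_iff]
  constructor
  · rintro ⟨_, ⟨i, j, hj, rfl⟩, hs⟩
    by_cases hj0 : j.val = 0
    · exact Or.inl (by simpa [cycleNFA, hj0] using hs)
    · simp only [cycleNFA, hj0, hC i j hj, if_false, if_true, Set.mem_singleton_iff] at hs
      subst hs
      exact Or.inr ⟨i, j, ⟨hj, fun h => hj0 (congrArg Fin.val h)⟩, rfl⟩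
  · rintro (rfl | ⟨i, j, ⟨hj, hj0⟩, rfl⟩)
    · obtain ⟨i, hi⟩ := h0
      exact ⟨_, ⟨i, _, hi, rfl⟩, by simp [cycleNFA]⟩
    · have hj0 : j.val ≠ 0 := fun h => hj0 (Fin.ext h)
      exact ⟨_, ⟨i, j, hj, rfl⟩, by simp [cycleNFA, hj0, hC i j hj]⟩

lemma stepSet_insert_auxSubset_true (R : ∀ i : Fin k, Set (Fin (π i)))
    (hR : ∀ i, ∀ j ∈ R i, 1 ≤ j.val ∧ j.val ≤ π i - 2) :
    (cycleNFA k π hπ).stepSet (insert (Sum.inl ()) (auxSubset R)) true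
      = cycleSubset k π (fun i => insert ⟨0, hπ i⟩ (shift (hπ i) 1 '' R i)) := by
  ext s
  simp only [NFA.mem_stepSet, Set.mem_insert_iff]
  constructor
  · rintro ⟨_, rfl | ⟨i, j, hj, rfl⟩, hs⟩
    · obtain ⟨i, rfl⟩ := hs
      exact ⟨i, _, Or.inl rfl, rfl⟩
    · simp only [cycleNFA, hR i j hj, and_self, if_true, Set.mem_singleton_iff] at hs
      exact ⟨i, _, Or.inr ⟨j, hj, rfl⟩, hs⟩
  · rintro ⟨i, _, rfl | ⟨j, hj, rfl⟩, rfl⟩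
    · exact ⟨_, Or.inl rfl, i, rfl⟩
    · exact ⟨_, Or.inr ⟨i, j, hj, rfl⟩, by simp [cycleNFA, hR i j hj]; rfl⟩

lemma evalFrom_cycleSubset_false_true (C : ∀ i : Fin k, Set (Fin (π i)))
    (hC : ∀ i, ∀ j ∈ C i, j.val ≤ π i - 2) (h0 : ∃ i, ⟨0, hπ i⟩ ∈ C i) :
    (cycleNFA k π hπ).evalFrom (cycleSubset k π C) [false, true]
      = cycleSubset k π (fun i => insert ⟨0, hπ i⟩ (shift (hπ i) 1 '' (C i \ {⟨0, hπ i⟩}))) := by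
  rw [NFA.evalFrom_cons, stepSet_cycleSubset_false hπ C hC h0, NFA.evalFrom_singleton,
    stepSet_insert_auxSubset_true]
  rintro i j ⟨hj, hj0⟩
  exact ⟨Nat.one_le_iff_ne_zero.mpr fun h => hj0 (Fin.ext h), hC i j hj⟩

lemma isReachable_singletons (hcop : ∀ i j, i ≠ j → Nat.Coprime (π i) (π j))
    (p : ∀ i, Fin (π i)) : (cycleNFA k π hπ).IsReachable (cycleSubset k π fun i => {p i}) := by
  obtain ⟨t, ht⟩ := Nat.exists_forall_mod_eq (fun i => (hπ i).ne') (fun i j => hcop i j) p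
  refine ⟨true :: List.replicate t true, ?_⟩
  rw [NFA.eval, NFA.evalFrom_cons, show (cycleNFA k π hπ).start = {Sum.inl ()} from rfl,
    stepSet_start_true, evalFrom_cycleSubset_replicate_true]
  congr! with i
  simp only [Set.image_singleton, Set.singleton_eq_singleton_iff]
  exact Fin.ext (by simp [ht])

lemma isReachable_of_isReachable_preimage_shift {P : ∀ i : Fin k, Set (Fin (π i))} (t : ℕ)
    (h : (cycleNFA k π hπ).IsReachable (cycleSubset k π fun i => shift (hπ i) t ⁻¹' P i)) :
    (cycleNFA k π hπ).IsReachable (cycleSubset k π P) := by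
  convert h.evalFrom (List.replicate t true)
  rw [evalFrom_cycleSubset_replicate_true]
  congr! with i
  exact (Set.image_preimage_eq _ (shift_bijective _ t).surjective).symm

lemma exists_shift_zero_mem_shift_one_notMem (hcop : ∀ i j, i ≠ j → Nat.Coprime (π i) (π j))
    {P : ∀ i : Fin k, Set (Fin (π i))} (hne : ∀ i, (P i).Nonempty)
    (hproper : ∀ i, P i ≠ Set.univ) :
    ∃ t, ∀ i, shift (hπ i) t ⟨0, hπ i⟩ ∈ P i ∧ shift (hπ i) t (shift (hπ i) 1 ⟨0, hπ i⟩) ∉ P i := by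
  choose p hp hsucc using fun i => exists_mem_shift_one_notMem (hπ i) (hne i) (hproper i)
  obtain ⟨t, ht⟩ := Nat.exists_forall_mod_eq (fun i => (hπ i).ne') (fun i j => hcop i j) p
  have hzero : ∀ i, shift (hπ i) t ⟨0, hπ i⟩ = p i := fun i => Fin.ext (by simp [ht])
  refine ⟨t, fun i => ⟨hzero i ▸ hp i, ?_⟩⟩
  rw [shift_shift, Nat.add_comm, ← shift_shift, hzero]
  exact hsucc i

lemma isReachable_of_isReachable_predecessors {P C : ∀ i : Fin k, Set (Fin (π i))}
    (h0 : ∀ i, ⟨0, hπ i⟩ ∈ P i) (h1 : ∀ i, shift (hπ i) 1 ⟨0, hπ i⟩ ∉ P i)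
    (hCP : ∀ i, C i \ {⟨0, hπ i⟩} = predecessors (hπ i) (P i)) (hC0 : ∃ i, ⟨0, hπ i⟩ ∈ C i)
    (h : (cycleNFA k π hπ).IsReachable (cycleSubset k π C)) :
    (cycleNFA k π hπ).IsReachable (cycleSubset k π P) := by
  have hC : ∀ i, ∀ j ∈ C i, j.val ≤ π i - 2 := fun i j hj => by
    by_cases hj0 : j = ⟨0, hπ i⟩
    · simp [hj0]
    · exact (val_mem_predecessors (h1 i) (hCP i ▸ ⟨hj, hj0⟩)).2
  convert h.evalFrom [false, true] using 1
  rw [evalFrom_cycleSubset_false_true hπ C hC hC0]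
  congr! with i
  rw [hCP, insert_zero_image_shift_predecessors (h0 i)]

lemma exists_smaller_of_zero_mem (hk : 2 ≤ k) {P : ∀ i : Fin k, Set (Fin (π i))}
    (h0 : ∀ i, ⟨0, hπ i⟩ ∈ P i) (h1 : ∀ i, shift (hπ i) 1 ⟨0, hπ i⟩ ∉ P i) {i₂ : Fin k}
    (h2 : 2 ≤ (P i₂).ncard) :
    ∃ C : ∀ i : Fin k, Set (Fin (π i)), (∀ i, (C i).Nonempty) ∧ (∀ i, C i ≠ Set.univ) ∧
      ∑ i, (C i).ncard < ∑ i, (P i).ncard ∧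
      ((cycleNFA k π hπ).IsReachable (cycleSubset k π C) →
        (cycleNFA k π hπ).IsReachable (cycleSubset k π P)) := by
  classical
  have : Nontrivial (Fin k) := Fin.nontrivial_iff_two_le.mpr hk
  obtain ⟨i₁, hi₁⟩ := exists_ne i₂
  set B := fun i => predecessors (hπ i) (P i)
  set C := fun i => if i = i₂ then B i else insert ⟨0, hπ i⟩ (B i) with hC
  have hB0 : ∀ i, ⟨0, hπ i⟩ ∉ B i := fun i h => by
    simpa using (val_mem_predecessors (h1 i) h).1
  have hCsub : ∀ i, C i ⊆ insert ⟨0, hπ i⟩ (B i) := fun i => by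
    by_cases hi : i = i₂ <;> simp [hC, hi, Set.subset_insert]
  have hncard : ∀ i, (C i).ncard + (if i = i₂ then 1 else 0) = (P i).ncard := fun i => by
    rw [← ncard_predecessors_add_one (h0 i)]
    by_cases hi : i = i₂ <;> simp [hC, hi, B, Set.ncard_insert_of_notMem (hB0 i)]
  refine ⟨C, fun i => ?_, fun i hi => insert_zero_predecessors_ne_univ (h0 i) (h1 i)
    (Set.univ_subset_iff.mp (hi ▸ hCsub i)), ?_, isReachable_of_isReachable_predecessors hπ h0 h1
    (fun i => show C i \ {⟨0, hπ i⟩} = B i from ?_) ⟨i₁, by simp [hC, hi₁]⟩⟩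
  · by_cases hi : i = i₂
    · subst hi
      refine Set.nonempty_of_ncard_ne_zero ?_
      have := hncard i
      simp only [if_true] at this
      omega
    · exact ⟨⟨0, hπ i⟩, by simp [hC, hi]⟩
  · refine Finset.sum_lt_sum (fun i _ => ?_) ⟨i₂, Finset.mem_univ _, ?_⟩
    · have := hncard i
      omega
    · have := hncard i₂
      simp only [if_true] at this
      omega
  · by_cases hi : i = i₂
    · simp [hC, hi, hB0]
    · simp [hC, hi, Set.insert_sdiff_self_of_notMem (hB0 i)]

lemma exists_smaller (hk : 2 ≤ k) (hcop : ∀ i j, i ≠ j → Nat.Coprime (π i) (π j))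
    {P : ∀ i : Fin k, Set (Fin (π i))} (hne : ∀ i, (P i).Nonempty)
    (hproper : ∀ i, P i ≠ Set.univ) {i₂ : Fin k} (h2 : 2 ≤ (P i₂).ncard) :
    ∃ C : ∀ i : Fin k, Set (Fin (π i)), (∀ i, (C i).Nonempty) ∧ (∀ i, C i ≠ Set.univ) ∧
      ∑ i, (C i).ncard < ∑ i, (P i).ncard ∧
      ((cycleNFA k π hπ).IsReachable (cycleSubset k π C) →
        (cycleNFA k π hπ).IsReachable (cycleSubset k π P)) := by
  obtain ⟨t, ht⟩ := exists_shift_zero_mem_shift_one_notMem hπ hcop hne hproper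
  obtain ⟨C, hCne, hCproper, hlt, hreach⟩ := exists_smaller_of_zero_mem hπ hk
    (P := fun i => shift (hπ i) t ⁻¹' P i) (fun i => (ht i).1) (fun i => (ht i).2)
    (i₂ := i₂) (by rwa [ncard_preimage_shift])
  simp only [ncard_preimage_shift] at hlt
  exact ⟨C, hCne, hCproper, hlt,
    fun h => isReachable_of_isReachable_preimage_shift hπ t (hreach h)⟩

end Automaton

end CycleNFA

theorem cycle_subsets_reachable_general (k : ℕ) (hk : 2 ≤ k) (π : Fin k → ℕ)
    (hcop : ∀ i j, i ≠ j → Nat.Coprime (π i) (π j))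
    (hπ : ∀ i, 0 < π i)
    (P : ∀ i : Fin k, Set (Fin (π i)))
    (hne : ∀ i, (P i).Nonempty) (hproper : ∀ i, P i ≠ Set.univ) :
    ∃ w : List Bool, (cycleNFA k π hπ).eval w = cycleSubset k π P := by
  induction hN : ∑ i, (P i).ncard using Nat.strong_induction_on generalizing P with
  | _ N ih =>
  by_cases hsingle : ∀ i, (P i).ncard = 1
  · choose p hp using fun i => Set.ncard_eq_one.mp (hsingle i)
    obtain rfl : P = fun i => {p i} := funext hp
    exact CycleNFA.isReachable_singletons hπ hcop p
  · obtain ⟨i₂, hi₂⟩ := not_forall.mp hsingle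
    have h2 : 2 ≤ (P i₂).ncard := by
      have := (Set.ncard_pos (P i₂).toFinite).mpr (hne i₂)
      omega
    obtain ⟨C, hCne, hCproper, hlt, hreach⟩ := CycleNFA.exists_smaller hπ hk hcop hne hproper h2
    exact hreach (ih _ (hN ▸ hlt) C hCne hCproper rfl)

theorem cycle_subsets_reachable (k : ℕ) (hk : 2 ≤ k) (π : Fin k → ℕ)
    (hπ3 : ∀ i, 3 ≤ π i) (hπ1 : ∀ h : 0 < k, π ⟨0, h⟩ = 3)
    (hcop : ∀ i j, i ≠ j → Nat.Coprime (π i) (π j))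
    (hπ : ∀ i, 0 < π i)
    (P : ∀ i : Fin k, Set (Fin (π i)))
    (hne : ∀ i, (P i).Nonempty) (hproper : ∀ i, P i ≠ Set.univ) :
    ∃ w : List Bool, (cycleNFA k π hπ).eval w = cycleSubset k π P :=
  cycle_subsets_reachable_general k hk π hcop hπ P hne hproper
end

section
/- For the NFA A_{π_1,...,π_k}, any two distinct subsets of the form P_1 ∪ ... ∪ P_k with ∅ ⊊ P_i ⊊ Q_i are distinguishable: there exists a string (of the form a^ℓ b) accepted from exactly one of them. -/
theorem Nat.eq_of_dvd_add_of_dvd_add {m j v ℓ : ℕ} (hj : j < m) (hv : v < m)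
    (hjℓ : m ∣ j + ℓ) (hvℓ : m ∣ v + ℓ) : j = v :=
  ((Nat.modEq_zero_iff_dvd.2 hjℓ).trans (Nat.modEq_zero_iff_dvd.2 hvℓ).symm
    |>.add_right_cancel' ℓ).eq_of_lt_of_lt hj hv

theorem Nat.exists_forall_dvd_add_of_pairwise_coprime {ι : Type*} [Fintype ι] (m v : ι → ℕ)
    (hm : ∀ i, m i ≠ 0) (hcop : Pairwise (Function.onFun Nat.Coprime m)) :
    ∃ ℓ, ∀ i, m i ∣ v i + ℓ := by
  obtain ⟨ℓ, hℓ⟩ := Nat.chineseRemainderOfFinset (fun i => m i - v i % m i) m Finset.univ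
    (fun i _ => hm i) (fun i _ j _ hij => hcop hij)
  refine ⟨ℓ, fun i => Nat.modEq_zero_iff_dvd.1 ?_⟩
  calc v i + ℓ ≡ v i % m i + (m i - v i % m i) [MOD m i] :=
        (Nat.mod_modEq _ _).symm.add (hℓ i (Finset.mem_univ i))
    _ = m i := Nat.add_sub_cancel' (Nat.mod_lt _ (Nat.pos_of_ne_zero (hm i))).le
    _ ≡ 0 [MOD m i] := Nat.modEq_zero_iff_dvd.2 dvd_rfl

section CycleNFA

variable {k : ℕ} {π : Fin k → ℕ}

def rotateSubsets (π : Fin k → ℕ) (P : ∀ i : Fin k, Set (Fin (π i))) (ℓ : ℕ) :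
    ∀ i : Fin k, Set (Fin (π i)) :=
  fun i => {j | ∃ j' ∈ P i, (j'.val + ℓ) % π i = j.val}

theorem rotateSubsets_zero (P : ∀ i : Fin k, Set (Fin (π i))) : rotateSubsets π P 0 = P := by
  funext i
  ext j
  simp only [rotateSubsets, add_zero, Set.mem_ofPred_eq]
  constructor
  · rintro ⟨j', hj', h⟩
    obtain rfl : j' = j := Fin.ext (by rwa [Nat.mod_eq_of_lt j'.isLt] at h)
    exact hj'
  · exact fun hj => ⟨j, hj, Nat.mod_eq_of_lt j.isLt⟩

theorem rotateSubsets_rotateSubsets_one (hπ : ∀ i, 0 < π i) (P : ∀ i : Fin k, Set (Fin (π i)))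
    (ℓ : ℕ) : rotateSubsets π (rotateSubsets π P ℓ) 1 = rotateSubsets π P (ℓ + 1) := by
  funext i
  ext j
  simp only [rotateSubsets, Set.mem_ofPred_eq]
  constructor
  · rintro ⟨j'', ⟨j', hj', h'⟩, h⟩
    exact ⟨j', hj', by rwa [← h', Nat.mod_add_mod, add_assoc] at h⟩
  · rintro ⟨j', hj', h⟩
    exact ⟨⟨(j'.val + ℓ) % π i, Nat.mod_lt _ (hπ i)⟩, ⟨j', hj', rfl⟩,
      by rwa [Nat.mod_add_mod, add_assoc]⟩

variable (hπ : ∀ i, 0 < π i)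

theorem cycleNFA_stepSet_true (P : ∀ i : Fin k, Set (Fin (π i))) :
    (cycleNFA k π hπ).stepSet (cycleSubset k π P) true =
      cycleSubset k π (rotateSubsets π P 1) := by
  ext s
  simp only [NFA.mem_stepSet, cycleSubset, rotateSubsets, Set.mem_ofPred_eq]
  constructor
  · rintro ⟨_, ⟨i, j, hj, rfl⟩, hs⟩
    exact ⟨i, _, ⟨j, hj, rfl⟩, hs⟩
  · rintro ⟨i, j, ⟨j', hj', hmod⟩, rfl⟩
    obtain rfl : j = ⟨(j'.val + 1) % π i, Nat.mod_lt _ (hπ i)⟩ := Fin.ext hmod.symm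
    exact ⟨_, ⟨i, j', hj', rfl⟩, rfl⟩

theorem cycleNFA_evalFrom_replicate_true (P : ∀ i : Fin k, Set (Fin (π i))) (ℓ : ℕ) :
    (cycleNFA k π hπ).evalFrom (cycleSubset k π P) (List.replicate ℓ true) =
      cycleSubset k π (rotateSubsets π P ℓ) := by
  induction ℓ with
  | zero => rw [List.replicate_zero, NFA.evalFrom_nil, rotateSubsets_zero]
  | succ ℓ ih =>
    rw [List.replicate_succ', NFA.evalFrom_append, ih, NFA.evalFrom_singleton,
      cycleNFA_stepSet_true, rotateSubsets_rotateSubsets_one hπ]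

theorem cycleNFA_stepSet_false_inter_accept_nonempty_iff (P : ∀ i : Fin k, Set (Fin (π i))) :
    ((cycleNFA k π hπ).stepSet (cycleSubset k π P) false ∩ (cycleNFA k π hπ).accept).Nonempty ↔
      ∃ i, ⟨0, hπ i⟩ ∈ P i := by
  rw [show (cycleNFA k π hπ).accept = {Sum.inl ()} from rfl, Set.inter_comm,
    Set.singleton_inter_nonempty, NFA.mem_stepSet]
  constructor
  · rintro ⟨_, ⟨i, j, hj, rfl⟩, hstep⟩
    by_cases h0 : j.val = 0
    · exact ⟨i, (Fin.ext h0 : j = ⟨0, hπ i⟩) ▸ hj⟩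
    · simp only [cycleNFA, if_neg h0] at hstep
      split_ifs at hstep <;> simp at hstep
  · rintro ⟨i, hi⟩
    exact ⟨_, ⟨i, _, hi, rfl⟩, by simp [cycleNFA]⟩

theorem cycleNFA_accepts_replicate_true_false_iff (P : ∀ i : Fin k, Set (Fin (π i))) (ℓ : ℕ) :
    ((cycleNFA k π hπ).evalFrom (cycleSubset k π P) (List.replicate ℓ true ++ [false]) ∩
        (cycleNFA k π hπ).accept).Nonempty ↔
      ∃ i, ∃ j ∈ P i, π i ∣ j.val + ℓ := by
  rw [NFA.evalFrom_append, NFA.evalFrom_singleton, cycleNFA_evalFrom_replicate_true,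
    cycleNFA_stepSet_false_inter_accept_nonempty_iff]
  simp only [rotateSubsets, Set.mem_ofPred_eq, Nat.dvd_iff_mod_eq_zero]

end CycleNFA

theorem exists_dvd_add_mem_and_not_dvd_add_mem {k : ℕ} {π : Fin k → ℕ} (hπ : ∀ i, 0 < π i)
    (hcop : ∀ i j, i ≠ j → Nat.Coprime (π i) (π j)) (A B : ∀ i : Fin k, Set (Fin (π i)))
    (hB : ∀ i, B i ≠ Set.univ) {i₀ : Fin k} {j₀ : Fin (π i₀)} (hj₀A : j₀ ∈ A i₀)
    (hj₀B : j₀ ∉ B i₀) :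
    ∃ ℓ, (∃ i, ∃ j ∈ A i, π i ∣ j.val + ℓ) ∧ ¬∃ i, ∃ j ∈ B i, π i ∣ j.val + ℓ := by
  choose c hc using fun i => (Set.ne_univ_iff_exists_notMem (B i)).1 (hB i)
  obtain ⟨w, hw₀, hw⟩ : ∃ w : ∀ i, Fin (π i), w i₀ = j₀ ∧ ∀ i, w i ∉ B i := by
    refine ⟨Function.update c i₀ j₀, Function.update_self .., fun i => ?_⟩
    rcases eq_or_ne i i₀ with rfl | hi
    · rwa [Function.update_self]
    · rw [Function.update_of_ne hi]
      exact hc i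
  obtain ⟨ℓ, hℓ⟩ := Nat.exists_forall_dvd_add_of_pairwise_coprime π (fun i => (w i).val)
    (fun i => (hπ i).ne') (fun i j hij => hcop i j hij)
  refine ⟨ℓ, ⟨i₀, j₀, hj₀A, hw₀ ▸ hℓ i₀⟩, ?_⟩
  rintro ⟨i, j, hj, hdvd⟩
  obtain rfl : j = w i := Fin.ext (Nat.eq_of_dvd_add_of_dvd_add j.isLt (w i).isLt hdvd (hℓ i))
  exact hw i hj

theorem cycle_subsets_distinguishable_general (k : ℕ) (π : Fin k → ℕ)
    (hcop : ∀ i j, i ≠ j → Nat.Coprime (π i) (π j))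
    (hπ : ∀ i, 0 < π i)
    (P P' : ∀ i : Fin k, Set (Fin (π i)))
    (hproper : ∀ i, P i ≠ Set.univ)
    (hproper' : ∀ i, P' i ≠ Set.univ)
    (hdiff : P ≠ P') :
    ∃ ℓ : ℕ,
      Xor'
        (((cycleNFA k π hπ).evalFrom (cycleSubset k π P)
            (List.replicate ℓ true ++ [false]) ∩ (cycleNFA k π hπ).accept).Nonempty)
        (((cycleNFA k π hπ).evalFrom (cycleSubset k π P')
            (List.replicate ℓ true ++ [false]) ∩ (cycleNFA k π hπ).accept).Nonempty) := by
  simp only [cycleNFA_accepts_replicate_true_false_iff]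
  obtain ⟨i₀, hi₀⟩ := Function.ne_iff.1 hdiff
  obtain ⟨j₀, hj₀⟩ := Set.symmDiff_nonempty.2 hi₀
  rcases hj₀ with ⟨hP, hP'⟩ | ⟨hP', hP⟩
  · obtain ⟨ℓ, h⟩ := exists_dvd_add_mem_and_not_dvd_add_mem hπ hcop P P' hproper' hP hP'
    exact ⟨ℓ, Or.inl h⟩
  · obtain ⟨ℓ, h⟩ := exists_dvd_add_mem_and_not_dvd_add_mem hπ hcop P' P hproper hP' hP
    exact ⟨ℓ, Or.inr h⟩

theorem cycle_subsets_distinguishable (k : ℕ) (hk : 2 ≤ k) (π : Fin k → ℕ)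
    (hπ3 : ∀ i, 3 ≤ π i) (hπ1 : ∀ h : 0 < k, π ⟨0, h⟩ = 3)
    (hcop : ∀ i j, i ≠ j → Nat.Coprime (π i) (π j))
    (hπ : ∀ i, 0 < π i)
    (P P' : ∀ i : Fin k, Set (Fin (π i)))
    (hne : ∀ i, (P i).Nonempty) (hproper : ∀ i, P i ≠ Set.univ)
    (hne' : ∀ i, (P' i).Nonempty) (hproper' : ∀ i, P' i ≠ Set.univ)
    (hdiff : P ≠ P') :
    ∃ ℓ : ℕ,
      Xor'
        (((cycleNFA k π hπ).evalFrom (cycleSubset k π P)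
            (List.replicate ℓ true ++ [false]) ∩ (cycleNFA k π hπ).accept).Nonempty)
        (((cycleNFA k π hπ).evalFrom (cycleSubset k π P')
            (List.replicate ℓ true ++ [false]) ∩ (cycleNFA k π hπ).accept).Nonempty) :=
  cycle_subsets_distinguishable_general k π hcop hπ P P' hproper hproper' hdiff
end

section
/- Every DFA recognizing the language of the NFA A_{π_1,...,π_k} (π_i pairwise coprime, π_1 = 3, all π_i ≥ 3, k ≥ 2) has at least ∏_{i=1}^k (2^{π_i} - 2) states. -/
open Sum Finset

namespace CycleAux

/-- Addition of `m` modulo `n` on `Fin n`. -/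
def fmadd {n : ℕ} (hn : 0 < n) (m : ℕ) (j : Fin n) : Fin n :=
  ⟨(j.val + m) % n, Nat.mod_lt _ hn⟩

lemma fmadd_val {n : ℕ} (hn : 0 < n) (m : ℕ) (j : Fin n) :
    (fmadd hn m j).val = (j.val + m) % n := rfl

lemma fmadd_fmadd {n : ℕ} (hn : 0 < n) (m m' : ℕ) (j : Fin n) :
    fmadd hn m (fmadd hn m' j) = fmadd hn (m' + m) j := by
  apply Fin.ext
  simp only [fmadd]
  rw [Nat.mod_add_mod, Nat.add_assoc]

lemma fmadd_eq_self {n : ℕ} (hn : 0 < n) {m : ℕ} (h : m % n = 0) (j : Fin n) :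
    fmadd hn m j = j := by
  apply Fin.ext
  have : (j.val + m) % n = (j.val + 0) % n :=
    Nat.ModEq.add_left _ (by simpa [Nat.ModEq] using h)
  simpa [fmadd, Nat.mod_eq_of_lt j.isLt] using this

lemma fmadd_left_inverse {n : ℕ} (hn : 0 < n) (m : ℕ) (j : Fin n) :
    fmadd hn (n - m % n) (fmadd hn m j) = j := by
  rw [fmadd_fmadd]
  apply fmadd_eq_self
  have h1 := Nat.div_add_mod m n
  have h2 : m % n < n := Nat.mod_lt _ hn
  have h3 : m + (n - m % n) = n * (m / n) + n := by omega
  rw [h3]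
  rw [← Nat.mul_succ, Nat.mul_mod_right]

lemma fmadd_inj {n : ℕ} (hn : 0 < n) (m : ℕ) : Function.Injective (fmadd hn m) := by
  intro a b hab
  rw [← fmadd_left_inverse hn m a, hab, fmadd_left_inverse]

/-- `fmadd` as an embedding. -/
def fmEmb {n : ℕ} (hn : 0 < n) (m : ℕ) : Fin n ↪ Fin n :=
  ⟨fmadd hn m, fmadd_inj hn m⟩

lemma fmEmb_trans {n : ℕ} (hn : 0 < n) (m m' : ℕ) :
    (fmEmb hn m).trans (fmEmb hn m') = fmEmb hn (m + m') := by
  apply Function.Embedding.ext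
  intro j
  exact fmadd_fmadd hn m' m j

lemma map_fmEmb_self {n : ℕ} (hn : 0 < n) {m : ℕ} (h : m % n = 0)
    (S : Finset (Fin n)) : S.map (fmEmb hn m) = S := by
  have : fmEmb hn m = Function.Embedding.refl _ :=
    Function.Embedding.ext (fun j => fmadd_eq_self hn h j)
  rw [this, Finset.map_refl]

/-- Boundary element: any nonempty proper subset of the cycle has an element whose
successor is outside. -/
lemma exists_boundary {n : ℕ} (hn : 0 < n) (S : Finset (Fin n))
    (hne : S.Nonempty) (hpr : S ≠ Finset.univ) :
    ∃ c ∈ S, fmadd hn 1 c ∉ S := by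
  by_contra h
  push_neg at h
  apply hpr
  apply Finset.eq_univ_iff_forall.mpr
  intro j
  obtain ⟨a, ha⟩ := hne
  have key : ∀ t : ℕ, fmadd hn t a ∈ S := by
    intro t
    induction t with
    | zero => rw [fmadd_eq_self hn (Nat.zero_mod n) a]; exact ha
    | succ t ih =>
      have := h _ ih
      rwa [fmadd_fmadd] at this
  have hj : fmadd hn (n - a.val + j.val) a = j := by
    apply Fin.ext
    have : a.val + (n - a.val + j.val) = n + j.val := by
      have := a.isLt; omega
    rw [fmadd_val, this, Nat.add_mod_left, Nat.mod_eq_of_lt j.isLt]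
  exact hj ▸ key _


open Sum Finset




variable {k : ℕ} {π : Fin k → ℕ} (hπ : ∀ i, 0 < π i)

/-- The configuration corresponding to a tuple of finsets. -/
def Csub (P : ∀ i : Fin k, Finset (Fin (π i))) : Set (CycleState k π) :=
  cycleSubset k π (fun i => (P i : Set (Fin (π i))))

lemma mem_Csub_q {P : ∀ i : Fin k, Finset (Fin (π i))} {i : Fin k} {j : Fin (π i)} :
    (Sum.inr (Sum.inl ⟨i, j⟩) : CycleState k π) ∈ Csub P ↔ j ∈ P i := by
  constructor
  · rintro ⟨i', j', hj', heq⟩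
    rw [Sum.inr.injEq, Sum.inl.injEq] at heq
    obtain ⟨rfl, hj⟩ := Sigma.mk.inj_iff.mp heq
    rw [eq_of_heq hj]
    exact hj'
  · intro hj
    exact ⟨i, j, hj, rfl⟩

lemma notMem_Csub_inl {P : ∀ i : Fin k, Finset (Fin (π i))} :
    (Sum.inl () : CycleState k π) ∉ Csub P := by
  rintro ⟨i, j, hj, heq⟩
  exact absurd heq (by simp)

lemma notMem_Csub_r {P : ∀ i : Fin k, Finset (Fin (π i))} {x : Σ i : Fin k, Fin (π i)} :
    (Sum.inr (Sum.inr x) : CycleState k π) ∉ Csub P := by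
  rintro ⟨i, j, hj, heq⟩
  exact absurd heq (by simp)

lemma Csub_congr {P P' : ∀ i : Fin k, Finset (Fin (π i))} (h : ∀ i, P i = P' i) :
    Csub (π := π) P = Csub P' := by
  have : P = P' := funext h
  rw [this]

lemma evalFrom_app (S : Set (CycleState k π)) (x y : List Bool) :
    (cycleNFA k π hπ).evalFrom S (x ++ y)
      = (cycleNFA k π hπ).evalFrom ((cycleNFA k π hπ).evalFrom S x) y := by
  simp [NFA.evalFrom, List.foldl_append]

lemma stepA (P : ∀ i : Fin k, Finset (Fin (π i))) :
    (cycleNFA k π hπ).stepSet (Csub P) true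
      = Csub (fun i => (P i).map (fmEmb (hπ i) 1)) := by
  ext s
  rw [NFA.mem_stepSet]
  constructor
  · rintro ⟨t, ht, hs⟩
    obtain ⟨i, j, hj, rfl⟩ := ht
    have hstep : (cycleNFA k π hπ).step (Sum.inr (Sum.inl ⟨i, j⟩)) true
        = {Sum.inr (Sum.inl ⟨i, fmadd (hπ i) 1 j⟩)} := rfl
    rw [hstep, Set.mem_singleton_iff] at hs
    subst hs
    rw [mem_Csub_q]
    exact Finset.mem_map.mpr ⟨j, hj, rfl⟩
  · rintro ⟨i, j', hj', rfl⟩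
    obtain ⟨j, hj, rfl⟩ := Finset.mem_map.mp hj'
    exact ⟨Sum.inr (Sum.inl ⟨i, j⟩), mem_Csub_q.mpr hj, rfl⟩

lemma stepA0 :
    (cycleNFA k π hπ).stepSet {Sum.inl ()} true
      = Csub (fun i => ({⟨0, hπ i⟩} : Finset (Fin (π i)))) := by
  ext s
  rw [NFA.mem_stepSet]
  constructor
  · rintro ⟨t, ht, hs⟩
    rw [Set.mem_singleton_iff] at ht
    subst ht
    obtain ⟨i, rfl⟩ := hs
    exact ⟨i, ⟨0, hπ i⟩, by simp, rfl⟩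
  · rintro ⟨i, j, hj, rfl⟩
    refine ⟨Sum.inl (), rfl, ?_⟩
    simp only [Finset.coe_singleton, Set.mem_singleton_iff] at hj
    subst hj
    exact ⟨i, rfl⟩

lemma evalA (P : ∀ i : Fin k, Finset (Fin (π i))) (m : ℕ) :
    (cycleNFA k π hπ).evalFrom (Csub P) (List.replicate m true)
      = Csub (fun i => (P i).map (fmEmb (hπ i) m)) := by
  induction m generalizing P with
  | zero =>
    simp only [List.replicate, NFA.evalFrom_nil]
    exact (Csub_congr (fun i => (map_fmEmb_self (hπ i) (Nat.zero_mod _) (P i)).symm))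
  | succ m ih =>
    rw [List.replicate_succ]
    have h1 : (cycleNFA k π hπ).evalFrom (Csub P) (true :: List.replicate m true)
        = (cycleNFA k π hπ).evalFrom ((cycleNFA k π hπ).stepSet (Csub P) true)
            (List.replicate m true) := rfl
    rw [h1, stepA, ih]
    apply Csub_congr
    intro i
    rw [Finset.map_map, fmEmb_trans]
    rw [Nat.add_comm]

lemma accB (P : ∀ i : Fin k, Finset (Fin (π i))) :
    (Sum.inl () : CycleState k π) ∈ (cycleNFA k π hπ).stepSet (Csub P) false
      ↔ ∃ i, (⟨0, hπ i⟩ : Fin (π i)) ∈ P i := by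
  rw [NFA.mem_stepSet]
  constructor
  · rintro ⟨t, ht, hs⟩
    obtain ⟨i, j, hj, rfl⟩ := ht
    by_cases h0 : j.val = 0
    · have : j = ⟨0, hπ i⟩ := Fin.ext h0
      subst this
      exact ⟨i, hj⟩
    · exfalso
      have hstep : (cycleNFA k π hπ).step (Sum.inr (Sum.inl ⟨i, j⟩)) false
          = if j.val = 0 then {Sum.inl ()}
            else if j.val ≤ π i - 2 then {Sum.inr (Sum.inr ⟨i, j⟩)} else ∅ := rfl
      rw [hstep, if_neg h0] at hs
      by_cases h2 : j.val ≤ π i - 2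
      · rw [if_pos h2] at hs
        exact absurd hs (by simp)
      · rw [if_neg h2] at hs
        exact hs
  · rintro ⟨i, hi⟩
    refine ⟨Sum.inr (Sum.inl ⟨i, ⟨0, hπ i⟩⟩), mem_Csub_q.mpr hi, ?_⟩
    have hstep : (cycleNFA k π hπ).step (Sum.inr (Sum.inl ⟨i, ⟨0, hπ i⟩⟩)) false
        = if (0:ℕ) = 0 then {Sum.inl ()}
          else if (0:ℕ) ≤ π i - 2 then {Sum.inr (Sum.inr ⟨i, ⟨0, hπ i⟩⟩)} else ∅ := rfl
    rw [hstep, if_pos rfl]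
    rfl

/-- The "grow" operation: effect of reading `b` then `a` on a configuration
containing a state at position `0`. -/
def grow (P : ∀ i : Fin k, Finset (Fin (π i))) (i : Fin k) : Finset (Fin (π i)) :=
  insert ⟨0, hπ i⟩
    (((P i).filter (fun j => 1 ≤ j.val ∧ j.val ≤ π i - 2)).map (fmEmb (hπ i) 1))

lemma stepBA (P : ∀ i : Fin k, Finset (Fin (π i)))
    (hz : ∃ i, (⟨0, hπ i⟩ : Fin (π i)) ∈ P i) :
    (cycleNFA k π hπ).evalFrom (Csub P) [false, true] = Csub (grow hπ P) := by
  have hEF : (cycleNFA k π hπ).evalFrom (Csub P) [false, true]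
      = (cycleNFA k π hπ).stepSet ((cycleNFA k π hπ).stepSet (Csub P) false) true := rfl
  rw [hEF]
  ext s
  rw [NFA.mem_stepSet]
  constructor
  · rintro ⟨t, ht, hst⟩
    rw [NFA.mem_stepSet] at ht
    obtain ⟨u, hu, htu⟩ := ht
    obtain ⟨i, j, hj, rfl⟩ := hu
    have hstep : (cycleNFA k π hπ).step (Sum.inr (Sum.inl ⟨i, j⟩)) false
        = if j.val = 0 then {Sum.inl ()}
          else if j.val ≤ π i - 2 then {Sum.inr (Sum.inr ⟨i, j⟩)} else ∅ := rfl
    rw [hstep] at htu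
    by_cases h0 : j.val = 0
    · rw [if_pos h0, Set.mem_singleton_iff] at htu
      subst htu
      obtain ⟨ℓ, rfl⟩ := hst
      rw [mem_Csub_q]
      exact Finset.mem_insert_self _ _
    · rw [if_neg h0] at htu
      by_cases h2 : j.val ≤ π i - 2
      · rw [if_pos h2, Set.mem_singleton_iff] at htu
        subst htu
        have hstep2 : (cycleNFA k π hπ).step (Sum.inr (Sum.inr ⟨i, j⟩)) true
            = if 1 ≤ j.val ∧ j.val ≤ π i - 2 then
                {Sum.inr (Sum.inl ⟨i, fmadd (hπ i) 1 j⟩)} else ∅ := rfl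
        rw [hstep2, if_pos ⟨Nat.one_le_iff_ne_zero.mpr h0, h2⟩, Set.mem_singleton_iff] at hst
        subst hst
        rw [mem_Csub_q]
        apply Finset.mem_insert_of_mem
        exact Finset.mem_map.mpr ⟨j, Finset.mem_filter.mpr ⟨hj, Nat.one_le_iff_ne_zero.mpr h0, h2⟩, rfl⟩
      · rw [if_neg h2] at htu
        exact absurd htu (Set.notMem_empty _)
  · rintro ⟨ℓ, j, hj, rfl⟩
    simp only [Finset.mem_coe, grow, Finset.mem_insert] at hj
    rcases hj with rfl | hj
    · obtain ⟨i0, hi0⟩ := hz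
      refine ⟨Sum.inl (), ?_, ⟨ℓ, rfl⟩⟩
      rw [NFA.mem_stepSet]
      refine ⟨Sum.inr (Sum.inl ⟨i0, ⟨0, hπ i0⟩⟩), mem_Csub_q.mpr hi0, ?_⟩
      have hstep : (cycleNFA k π hπ).step (Sum.inr (Sum.inl ⟨i0, ⟨0, hπ i0⟩⟩)) false
          = if (0:ℕ) = 0 then {Sum.inl ()}
            else if (0:ℕ) ≤ π i0 - 2 then {Sum.inr (Sum.inr ⟨i0, ⟨0, hπ i0⟩⟩)} else ∅ := rfl
      rw [hstep, if_pos rfl]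
      rfl
    · obtain ⟨j', hj', rfl⟩ := Finset.mem_map.mp hj
      obtain ⟨hjP, h1, h2⟩ := Finset.mem_filter.mp hj'
      refine ⟨Sum.inr (Sum.inr ⟨ℓ, j'⟩), ?_, ?_⟩
      · rw [NFA.mem_stepSet]
        refine ⟨Sum.inr (Sum.inl ⟨ℓ, j'⟩), mem_Csub_q.mpr hjP, ?_⟩
        have hstep : (cycleNFA k π hπ).step (Sum.inr (Sum.inl ⟨ℓ, j'⟩)) false
            = if j'.val = 0 then {Sum.inl ()}
              else if j'.val ≤ π ℓ - 2 then {Sum.inr (Sum.inr ⟨ℓ, j'⟩)} else ∅ := rfl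
        rw [hstep, if_neg (by omega), if_pos h2]
        rfl
      · have hstep2 : (cycleNFA k π hπ).step (Sum.inr (Sum.inr ⟨ℓ, j'⟩)) true
            = if 1 ≤ j'.val ∧ j'.val ≤ π ℓ - 2 then
                {Sum.inr (Sum.inl ⟨ℓ, fmadd (hπ ℓ) 1 j'⟩)} else ∅ := rfl
        rw [hstep2, if_pos ⟨h1, h2⟩]
        rfl


lemma fmEmb_apply {n : ℕ} (hn : 0 < n) (m : ℕ) (j : Fin n) :
    fmEmb hn m j = fmadd hn m j := rfl

lemma crt (hp : ∀ i, 0 < π i) (hcop : ∀ i j, i ≠ j → Nat.Coprime (π i) (π j))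
    (a : Fin k → ℕ) :
    ∃ m : ℕ, ∀ i, m % π i = a i % π i := by
  obtain ⟨m, hm⟩ := Nat.chineseRemainderOfFinset a π Finset.univ
    (fun i _ => (hp i).ne') (fun i _ j _ hij => hcop i j hij)
  exact ⟨m, fun i => hm i (Finset.mem_univ i)⟩

theorem reach (hk : 2 ≤ k) (hπ3 : ∀ i, 3 ≤ π i)
    (hcop : ∀ i j, i ≠ j → Nat.Coprime (π i) (π j))
    (P : ∀ i : Fin k, Finset (Fin (π i)))
    (hne : ∀ i, (P i).Nonempty) (hpr : ∀ i, P i ≠ Finset.univ) :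
    ∃ w : List Bool, (cycleNFA k π hπ).eval w = Csub P := by
  classical
  suffices H : ∀ n : ℕ, ∀ P : ∀ i : Fin k, Finset (Fin (π i)),
      (∀ i, (P i).Nonempty) → (∀ i, P i ≠ Finset.univ) → (∑ i, (P i).card) = n →
      ∃ w : List Bool, (cycleNFA k π hπ).eval w = Csub P by
    exact H _ P hne hpr rfl
  intro n
  induction n using Nat.strong_induction_on with
  | _ n IH =>
  intro P hne hpr hsum
  have hbd : ∀ i, ∃ c ∈ P i, fmadd (hπ i) 1 c ∉ P i :=
    fun i => exists_boundary (hπ i) (P i) (hne i) (hpr i)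
  choose c hcP hcS using hbd
  by_cases hall : ∀ i, (P i).card = 1
  · -- base case: all singletons
    have hPsing : ∀ i, P i = {c i} := by
      intro i
      obtain ⟨a, ha⟩ := Finset.card_eq_one.mp (hall i)
      have hca : c i = a := by
        have := hcP i; rw [ha, Finset.mem_singleton] at this; exact this
      rw [ha, hca]
    obtain ⟨m, hm⟩ := crt hπ hcop (fun i => (c i).val)
    refine ⟨true :: List.replicate m true, ?_⟩
    have h0 : (cycleNFA k π hπ).eval (true :: List.replicate m true)
        = (cycleNFA k π hπ).evalFrom
            ((cycleNFA k π hπ).stepSet {Sum.inl ()} true) (List.replicate m true) := rfl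
    rw [h0, stepA0, evalA]
    apply Csub_congr
    intro i
    rw [Finset.map_singleton, hPsing i]
    congr 1
    apply Fin.ext
    show ((0:ℕ) + m) % π i = (c i).val
    rw [Nat.zero_add, hm i, Nat.mod_eq_of_lt (c i).isLt]
  · -- inductive step
    push_neg at hall
    obtain ⟨ℓ0, hℓ0⟩ := hall
    have hℓ0card : 2 ≤ (P ℓ0).card := by
      have := Finset.card_pos.mpr (hne ℓ0); omega
    set base : ∀ i : Fin k, Finset (Fin (π i)) :=
      fun i => ((P i).erase (c i)).map (fmEmb (hπ i) (π i - 1 - (c i).val)) with hbase_def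
    set D : ∀ i : Fin k, Finset (Fin (π i)) :=
      fun i => if i = ℓ0 then base i else insert ⟨0, hπ i⟩ (base i) with hD_def
    have hbase : ∀ i, ∀ j ∈ base i, 1 ≤ j.val ∧ j.val ≤ π i - 2 := by
      intro i j hj
      simp only [hbase_def] at hj
      obtain ⟨p, hp, rfl⟩ := Finset.mem_map.mp hj
      obtain ⟨hpne, hpP⟩ := Finset.mem_erase.mp hp
      have hclt : (c i).val < π i := (c i).isLt
      have hplt : p.val < π i := p.isLt
      have hpv : p.val ≠ (c i).val := fun h => hpne (Fin.ext h)
      have h3 := hπ3 i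
      simp only [fmEmb_apply, fmadd_val]
      by_cases hle : p.val ≤ (c i).val
      · have hXlt : p.val + (π i - 1 - (c i).val) < π i := by omega
        rw [Nat.mod_eq_of_lt hXlt]
        constructor
        · by_contra h
          have hc1 : (c i).val = π i - 1 := by omega
          have hp0 : p.val = 0 := by omega
          apply hcS i
          have hfc : fmadd (hπ i) 1 (c i) = p := by
            apply Fin.ext
            rw [fmadd_val, hc1]
            have hpi : π i - 1 + 1 = π i := by omega
            rw [hpi, Nat.mod_self, hp0]
          rw [hfc]; exact hpP
        · omega
      · have hEq : p.val + (π i - 1 - (c i).val) = π i + (p.val - 1 - (c i).val) := by omega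
        rw [hEq, Nat.add_mod_left, Nat.mod_eq_of_lt (by omega)]
        constructor
        · by_contra h
          have hp1 : p.val = (c i).val + 1 := by omega
          apply hcS i
          have hfc : fmadd (hπ i) 1 (c i) = p := by
            apply Fin.ext
            rw [fmadd_val, Nat.mod_eq_of_lt (by omega), hp1]
          rw [hfc]; exact hpP
        · omega
    have h0base : ∀ i, (⟨0, hπ i⟩ : Fin (π i)) ∉ base i := by
      intro i h
      have := (hbase i _ h).1
      simp at this
    have hbasecard : ∀ i, (base i).card = (P i).card - 1 := by
      intro i
      simp only [hbase_def, Finset.card_map]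
      exact Finset.card_erase_of_mem (hcP i)
    have hDne : ∀ i, (D i).Nonempty := by
      intro i
      simp only [hD_def]
      by_cases h : i = ℓ0
      · rw [if_pos h]
        rw [← Finset.card_pos, hbasecard]
        subst h
        omega
      · rw [if_neg h]
        exact Finset.insert_nonempty _ _
    have hDpr : ∀ i, D i ≠ Finset.univ := by
      intro i hDuniv
      have h3 := hπ3 i
      have hlast : (⟨π i - 1, by omega⟩ : Fin (π i)) ∈ D i := by
        rw [hDuniv]; exact Finset.mem_univ _
      have hnotbase : (⟨π i - 1, by omega⟩ : Fin (π i)) ∉ base i := by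
        intro h
        have := (hbase i _ h).2
        simp only [] at this
        omega
      simp only [hD_def] at hlast
      by_cases h : i = ℓ0
      · rw [if_pos h] at hlast; exact hnotbase hlast
      · rw [if_neg h] at hlast
        rcases Finset.mem_insert.mp hlast with heq | hmem
        · have := congrArg Fin.val heq
          simp only [] at this
          omega
        · exact hnotbase hmem
    have hDcard : (∑ i, (D i).card) < n := by
      rw [← hsum]
      apply Finset.sum_lt_sum
      · intro i _
        simp only [hD_def]
        by_cases h : i = ℓ0
        · rw [if_pos h, hbasecard]; omega
        · rw [if_neg h, Finset.card_insert_of_notMem (h0base i), hbasecard]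
          have := Finset.card_pos.mpr (hne i)
          omega
      · refine ⟨ℓ0, Finset.mem_univ _, ?_⟩
        simp only [hD_def, if_true]
        rw [hbasecard]
        omega
    obtain ⟨w, hw⟩ := IH _ hDcard D hDne hDpr rfl
    obtain ⟨m, hm⟩ := crt hπ hcop (fun i => (c i).val)
    refine ⟨w ++ ([false, true] ++ List.replicate m true), ?_⟩
    have hz : ∃ i, (⟨0, hπ i⟩ : Fin (π i)) ∈ D i := by
      haveI : Nontrivial (Fin k) := Fin.nontrivial_iff_two_le.mpr hk
      obtain ⟨i1, hi1⟩ := exists_ne ℓ0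
      refine ⟨i1, ?_⟩
      simp only [hD_def]
      rw [if_neg hi1]
      exact Finset.mem_insert_self _ _
    have hw' : (cycleNFA k π hπ).evalFrom (cycleNFA k π hπ).start w = Csub D := hw
    show (cycleNFA k π hπ).evalFrom _ _ = _
    rw [evalFrom_app, hw']
    rw [evalFrom_app, stepBA hπ D hz, evalA]
    apply Csub_congr
    intro i
    have hfilter : (D i).filter (fun j => 1 ≤ j.val ∧ j.val ≤ π i - 2) = base i := by
      have hfb : (base i).filter (fun j => 1 ≤ j.val ∧ j.val ≤ π i - 2) = base i :=
        Finset.filter_true_of_mem (hbase i)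
      simp only [hD_def]
      by_cases h : i = ℓ0
      · rw [if_pos h]; exact hfb
      · rw [if_neg h, Finset.filter_insert, if_neg (by simp), hfb]
    show (grow hπ D i).map (fmEmb (hπ i) m) = P i
    simp only [grow]
    rw [hfilter, Finset.map_insert]
    simp only [hbase_def]
    rw [Finset.map_map, Finset.map_map, fmEmb_trans, fmEmb_trans]
    have hclt : (c i).val < π i := (c i).isLt
    have h3 := hπ3 i
    have harr : π i - 1 - (c i).val + (1 + m) = (π i - 1 - (c i).val) + 1 + m := by omega
    have hmod : ((π i - 1 - (c i).val) + 1 + m) % π i = 0 := by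
      have h1 : ((π i - 1 - (c i).val) + 1 + m) % π i
          = ((π i - 1 - (c i).val) + 1 + (c i).val) % π i :=
        Nat.ModEq.add_left _ (hm i)
      have h2 : (π i - 1 - (c i).val) + 1 + (c i).val = π i := by omega
      rw [h1, h2, Nat.mod_self]
    rw [harr, map_fmEmb_self (hπ i) hmod]
    have hc0 : fmadd (hπ i) m (⟨0, hπ i⟩ : Fin (π i)) = c i := by
      apply Fin.ext
      rw [fmadd_val, Nat.zero_add, hm i, Nat.mod_eq_of_lt (c i).isLt]
    rw [show (fmEmb (hπ i) m) ⟨0, hπ i⟩ = c i from hc0]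
    exact Finset.insert_erase (hcP i)

end CycleAux

namespace CycleAux

variable {k : ℕ} {π : Fin k → ℕ} (hπ : ∀ i, 0 < π i)

lemma acc_iff (x : List Bool) :
    x ∈ (cycleNFA k π hπ).accepts ↔ Sum.inl () ∈ (cycleNFA k π hπ).eval x := by
  rw [NFA.mem_accepts]
  constructor
  · rintro ⟨S, hS, hx⟩
    have hS' : S = Sum.inl () := hS
    rwa [hS'] at hx
  · intro h
    exact ⟨_, rfl, h⟩

lemma distinguish (hcop : ∀ i j, i ≠ j → Nat.Coprime (π i) (π j))
    (P P' : ∀ i : Fin k, Finset (Fin (π i)))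
    (hpr' : ∀ i, P' i ≠ Finset.univ) (i0 : Fin k) (x0 : Fin (π i0))
    (hx0P : x0 ∈ P i0) (hx0P' : x0 ∉ P' i0) :
    ∃ z : List Bool,
      Sum.inl () ∈ (cycleNFA k π hπ).evalFrom (Csub P) z ∧
      Sum.inl () ∉ (cycleNFA k π hπ).evalFrom (Csub P') z := by
  classical
  have hX : ∀ i, ∃ y : Fin (π i), y ∉ P' i ∧ (i = i0 → y ∈ P i) := by
    intro i
    by_cases h : i = i0
    · subst h
      exact ⟨x0, hx0P', fun _ => hx0P⟩
    · have hny : ∃ y : Fin (π i), y ∉ P' i := by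
        by_contra hall
        push_neg at hall
        exact hpr' i (Finset.eq_univ_iff_forall.mpr hall)
      obtain ⟨y, hy⟩ := hny
      exact ⟨y, hy, fun h' => absurd h' h⟩
  choose x hx1 hx2 using hX
  obtain ⟨m, hm⟩ := crt hπ hcop (fun i => π i - (x i).val)
  have key : ∀ R : ∀ i : Fin k, Finset (Fin (π i)),
      (Sum.inl () ∈ (cycleNFA k π hπ).evalFrom (Csub R) (List.replicate m true ++ [false])
        ↔ ∃ i, x i ∈ R i) := by
    intro R
    rw [evalFrom_app, evalA]
    rw [show (cycleNFA k π hπ).evalFrom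
        (Csub (fun i => (R i).map (fmEmb (hπ i) m))) [false]
        = (cycleNFA k π hπ).stepSet
            (Csub (fun i => (R i).map (fmEmb (hπ i) m))) false from rfl]
    rw [accB]
    apply exists_congr
    intro i
    have h0 : fmadd (hπ i) m (x i) = ⟨0, hπ i⟩ := by
      apply Fin.ext
      rw [fmadd_val]
      have h1 : ((x i).val + m) % π i = ((x i).val + (π i - (x i).val)) % π i :=
        Nat.ModEq.add_left _ (hm i)
      have h2 : (x i).val + (π i - (x i).val) = π i := by
        have := (x i).isLt; omega
      rw [h1, h2, Nat.mod_self]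
    constructor
    · intro hmem
      obtain ⟨j, hj, hje⟩ := Finset.mem_map.mp hmem
      have hjx : j = x i := fmadd_inj (hπ i) m (hje.trans h0.symm)
      rwa [← hjx]
    · intro hmem
      exact Finset.mem_map.mpr ⟨x i, hmem, h0⟩
  refine ⟨List.replicate m true ++ [false], ?_, ?_⟩
  · rw [key]
    exact ⟨i0, hx2 i0 rfl⟩
  · rw [key]
    rintro ⟨i, hi⟩
    exact hx1 i hi

lemma card_subtype_proper (n : ℕ) (hn : 0 < n) :
    Fintype.card {A : Finset (Fin n) // A.Nonempty ∧ A ≠ Finset.univ} = 2 ^ n - 2 := by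
  classical
  haveI : Nonempty (Fin n) := ⟨⟨0, hn⟩⟩
  rw [Fintype.card_subtype]
  have huniv_ne : (Finset.univ : Finset (Fin n)) ≠ ∅ := Finset.univ_nonempty.ne_empty
  have hfilter : (Finset.univ.filter
        fun A : Finset (Fin n) => A.Nonempty ∧ A ≠ Finset.univ)
      = Finset.univ \ {∅, Finset.univ} := by
    ext A
    simp [Finset.nonempty_iff_ne_empty, not_or]
  rw [hfilter, Finset.card_sdiff_of_subset (Finset.subset_univ _), Finset.card_univ,
    Fintype.card_finset, Fintype.card_fin]
  rw [Finset.card_insert_of_notMem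
    (by rw [Finset.mem_singleton]; exact fun h => huniv_ne h.symm),
    Finset.card_singleton]

end CycleAux

open CycleAux in
theorem dfa_lower_bound (k : ℕ) (hk : 2 ≤ k) (π : Fin k → ℕ)
    (hπ3 : ∀ i, 3 ≤ π i) (hπ1 : ∀ h : 0 < k, π ⟨0, h⟩ = 3)
    (hcop : ∀ i j, i ≠ j → Nat.Coprime (π i) (π j))
    (hπ : ∀ i, 0 < π i)
    (Q' : Type) [Fintype Q'] (M : DFA Bool Q')
    (hacc : M.accepts = (cycleNFA k π hπ).accepts) :
    ∏ i, (2 ^ (π i) - 2) ≤ Fintype.card Q' := by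
  classical
  have hreach : ∀ P : (∀ i : Fin k, {A : Finset (Fin (π i)) // A.Nonempty ∧ A ≠ Finset.univ}),
      ∃ w : List Bool, (cycleNFA k π hπ).eval w = Csub (fun i => (P i).1) :=
    fun P => reach hπ hk hπ3 hcop _ (fun i => (P i).2.1) (fun i => (P i).2.2)
  choose w hw using hreach
  have hinj : Function.Injective
      (fun P : (∀ i : Fin k, {A : Finset (Fin (π i)) // A.Nonempty ∧ A ≠ Finset.univ}) =>
        M.evalFrom M.start (w P)) := by
    have main : ∀ A B, M.evalFrom M.start (w A) = M.evalFrom M.start (w B) →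
        ∀ (i0 : Fin k) (x0 : Fin (π i0)), x0 ∈ (A i0).1 → x0 ∉ (B i0).1 → False := by
      intro A B hF i0 x0 hxA hxB
      obtain ⟨z, hz1, hz2⟩ := distinguish hπ hcop (fun i => (A i).1) (fun i => (B i).1)
        (fun i => (B i).2.2) i0 x0 hxA hxB
      have hwA : (cycleNFA k π hπ).evalFrom (cycleNFA k π hπ).start (w A)
          = Csub (fun i => (A i).1) := hw A
      have hwB : (cycleNFA k π hπ).evalFrom (cycleNFA k π hπ).start (w B)
          = Csub (fun i => (B i).1) := hw B
      have hA : (w A ++ z) ∈ (cycleNFA k π hπ).accepts := by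
        rw [acc_iff]
        show Sum.inl () ∈ (cycleNFA k π hπ).evalFrom (cycleNFA k π hπ).start (w A ++ z)
        rw [evalFrom_app, hwA]
        exact hz1
      have hB : (w B ++ z) ∉ (cycleNFA k π hπ).accepts := by
        rw [acc_iff]
        show Sum.inl () ∉ (cycleNFA k π hπ).evalFrom (cycleNFA k π hπ).start (w B ++ z)
        rw [evalFrom_app, hwB]
        exact hz2
      have hMeq : M.eval (w A ++ z) = M.eval (w B ++ z) := by
        show M.evalFrom M.start (w A ++ z) = M.evalFrom M.start (w B ++ z)
        rw [DFA.evalFrom_of_append, DFA.evalFrom_of_append, hF]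
      have hiff : (w A ++ z) ∈ M.accepts ↔ (w B ++ z) ∈ M.accepts := by
        rw [DFA.mem_accepts, DFA.mem_accepts, hMeq]
      rw [hacc] at hiff
      exact hB (hiff.mp hA)
    intro A B hF
    dsimp only [] at hF
    by_contra hne'
    have hex : ∃ i0, (A i0).1 ≠ (B i0).1 := by
      by_contra hall
      push_neg at hall
      exact hne' (funext fun i => Subtype.ext (hall i))
    obtain ⟨i0, hi0⟩ := hex
    by_cases hsub : (A i0).1 ⊆ (B i0).1
    · have hsub' : ¬ (B i0).1 ⊆ (A i0).1 :=
        fun h => hi0 (Finset.Subset.antisymm hsub h)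
      obtain ⟨x0, hxB, hxA⟩ := Finset.not_subset.mp hsub'
      exact main B A hF.symm i0 x0 hxB hxA
    · obtain ⟨x0, hxA, hxB⟩ := Finset.not_subset.mp hsub
      exact main A B hF i0 x0 hxA hxB
  calc ∏ i, (2 ^ (π i) - 2)
      = Fintype.card (∀ i : Fin k, {A : Finset (Fin (π i)) // A.Nonempty ∧ A ≠ Finset.univ}) := by
        rw [Fintype.card_pi]
        exact (Finset.prod_congr rfl fun i _ => (card_subtype_proper (π i) (hπ i)).symm)
    _ ≤ Fintype.card Q' := Fintype.card_le_of_injective _ hinj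
end

section
/- For every regular expression α of alphabetic width n ≥ 1, there exists an NFA with n + 1 states recognizing L(α), having a unique non-reenterable initial state, and remembering the last symbol (i.e., there is a partition of the non-initial states into sets Q_a, a ∈ Σ, such that all transitions by symbol a lead into Q_a). -/
/-!
The automaton is the Glushkov (position) automaton of `r`: besides the initial state it has one
state for each occurrence of a symbol in `r`, and a transition by `a` always enters an occurrence
of `a`. It is built by recursion on `r` through Glushkov's `first`, `follow` and `last` sets.

Correctness is proved compositionally through residual languages. The residual languages of the
positions are the unique family `L` with `[] ∈ L p ↔ p ∈ last` and
`a :: w ∈ L p ↔ ∃ p' ∈ follow p a, w ∈ L p'`, so for each construction it suffices to check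
these equations for an explicit candidate, e.g. `L₁ p * L(r₂)` for a position `p` of `r₁` in
`r₁ r₂`, or `L₁ p * L(r₁)∗` in `r₁∗`.
-/

/-- Alphabetic width of a regular expression: the number of occurrences of
alphabet symbols. -/
def alphabeticWidth {α : Type} : RegularExpression α → ℕ
  | RegularExpression.zero => 0
  | RegularExpression.epsilon => 0
  | RegularExpression.char _ => 1
  | RegularExpression.plus r s => alphabeticWidth r + alphabeticWidth s
  | RegularExpression.comp r s => alphabeticWidth r + alphabeticWidth s
  | RegularExpression.star r => alphabeticWidth r

open Computability

namespace Language

variable {α : Type*} {l m : Language α} {a : α} {w : List α}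

theorem cons_mem_mul :
    a :: w ∈ l * m ↔ ([] ∈ l ∧ a :: w ∈ m) ∨ ∃ u v, a :: u ∈ l ∧ v ∈ m ∧ u ++ v = w := by
  simp only [mem_mul]
  constructor
  · rintro ⟨_ | ⟨b, u⟩, hu, v, hv, huv⟩
    · exact Or.inl ⟨hu, huv ▸ hv⟩
    · obtain ⟨rfl, rfl⟩ := List.cons_eq_cons.mp huv
      exact Or.inr ⟨u, v, hu, hv, rfl⟩
  · rintro (⟨hl, hm⟩ | ⟨u, v, hu, hv, rfl⟩)
    · exact ⟨[], hl, _, hm, rfl⟩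
    · exact ⟨a :: u, hu, v, hv, rfl⟩

theorem cons_mem_kstar : a :: w ∈ l∗ ↔ ∃ u v, a :: u ∈ l ∧ v ∈ l∗ ∧ u ++ v = w := by
  constructor
  · intro h
    obtain ⟨_ | ⟨_ | ⟨b, u⟩, S⟩, hw, hS⟩ := mem_kstar_iff_exists_nonempty.mp h
    · simp at hw
    · exact absurd rfl (hS [] (by simp)).2
    · obtain ⟨rfl, rfl⟩ := List.cons_eq_cons.mp hw
      exact ⟨u, S.flatten, (hS _ (by simp)).1,
        join_mem_kstar fun y hy => (hS y (by simp [hy])).1, rfl⟩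
  · rintro ⟨u, v, hu, hv, rfl⟩
    rw [← one_add_self_mul_kstar_eq_kstar]
    exact Or.inr (append_mem_mul hu hv)

end Language

namespace NFA

variable {α σ : Type*} (M : NFA α σ)

theorem mem_acceptsFrom_iff_exists {S : Set σ} {w : List α} :
    w ∈ M.acceptsFrom S ↔ ∃ s ∈ S, w ∈ M.acceptsFrom {s} := by
  simp only [mem_acceptsFrom, mem_evalFrom_iff_exists (S := S)]
  tauto

theorem cons_mem_acceptsFrom_singleton {s : σ} {a : α} {w : List α} :
    a :: w ∈ M.acceptsFrom {s} ↔ ∃ t ∈ M.step s a, w ∈ M.acceptsFrom {t} := by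
  rw [cons_mem_acceptsFrom, stepSet_singleton, mem_acceptsFrom_iff_exists]

end NFA

-- `first`, `follow`, `last` and `nullable` are Glushkov's sets of a regular expression, and
-- `label p` is the symbol occurring at position `p`.
structure PositionAutomaton (σ P : Type*) where
  first : σ → Set P
  follow : P → σ → Set P
  nullable : Prop
  last : Set P
  label : P → σ
  label_of_mem_first {a : σ} {p : P} : p ∈ first a → label p = a
  label_of_mem_follow {q : P} {a : σ} {p : P} : p ∈ follow q a → label p = a

namespace PositionAutomaton

variable {σ P P₁ P₂ : Type*}

def toNFA (G : PositionAutomaton σ P) : NFA σ (Option P) where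
  step q a := some '' q.elim (G.first a) (G.follow · a)
  start := {none}
  accept := {q | q.elim G.nullable (· ∈ G.last)}

def lang (G : PositionAutomaton σ P) : Language σ := G.toNFA.accepts

def langFrom (G : PositionAutomaton σ P) (p : P) : Language σ := G.toNFA.acceptsFrom {some p}

section Semantics

variable (G : PositionAutomaton σ P) {a : σ} {w : List σ} {p : P}

theorem toNFA_step_subset (q : Option P) (a : σ) :
    G.toNFA.step q a ⊆ some '' (G.label ⁻¹' {a}) := by
  refine Set.image_mono fun p hp => ?_
  cases q with
  | none => exact G.label_of_mem_first hp
  | some q => exact G.label_of_mem_follow hp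

theorem toNFA_step_none (a : σ) : G.toNFA.step none a = some '' G.first a := rfl

theorem toNFA_step_some (q : P) (a : σ) : G.toNFA.step (some q) a = some '' G.follow q a := rfl

theorem nil_mem_lang : [] ∈ G.lang ↔ G.nullable := by
  simp [lang, NFA.accepts_eq_acceptsFrom_start, toNFA]

theorem cons_mem_lang : a :: w ∈ G.lang ↔ ∃ p ∈ G.first a, w ∈ G.langFrom p := by
  rw [lang, NFA.accepts_eq_acceptsFrom_start, show G.toNFA.start = {none} from rfl]
  simp only [NFA.cons_mem_acceptsFrom_singleton, toNFA_step_none, Set.exists_mem_image, langFrom]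

theorem nil_mem_langFrom : [] ∈ G.langFrom p ↔ p ∈ G.last := by
  simp [langFrom, toNFA]

theorem cons_mem_langFrom :
    a :: w ∈ G.langFrom p ↔ ∃ p' ∈ G.follow p a, w ∈ G.langFrom p' := by
  simp only [langFrom, NFA.cons_mem_acceptsFrom_singleton, toNFA_step_some, Set.exists_mem_image]

theorem langFrom_eq_of {L : P → Language σ} (hnil : ∀ p, [] ∈ L p ↔ p ∈ G.last)
    (hcons : ∀ p a w, a :: w ∈ L p ↔ ∃ p' ∈ G.follow p a, w ∈ L p') :
    G.langFrom = L := by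
  funext p
  ext w
  induction w generalizing p with
  | nil => rw [nil_mem_langFrom, hnil]
  | cons a w ih => simp only [cons_mem_langFrom, hcons, ih]

theorem lang_eq_of {L : Language σ} (hnil : [] ∈ L ↔ G.nullable)
    (hcons : ∀ a w, a :: w ∈ L ↔ ∃ p ∈ G.first a, w ∈ G.langFrom p) : G.lang = L := by
  ext (_ | ⟨a, w⟩)
  · rw [nil_mem_lang, hnil]
  · rw [cons_mem_lang, hcons]

end Semantics

@[simps]
def zero : PositionAutomaton σ Empty where
  first _ := ∅
  follow _ _ := ∅
  nullable := False
  last := ∅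
  label := Empty.elim
  label_of_mem_first := fun {_ p} _ => p.elim
  label_of_mem_follow := fun {_ _ p} _ => p.elim

@[simps]
def one : PositionAutomaton σ Empty where
  first _ := ∅
  follow _ _ := ∅
  nullable := True
  last := ∅
  label := Empty.elim
  label_of_mem_first := fun {_ p} _ => p.elim
  label_of_mem_follow := fun {_ _ p} _ => p.elim

@[simps]
def char (a : σ) : PositionAutomaton σ Unit where
  first b := {_p | b = a}
  follow _ _ := ∅
  nullable := False
  last := Set.univ
  label _ := a
  label_of_mem_first h := h.symm
  label_of_mem_follow h := h.elim

@[simps]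
def plus (G₁ : PositionAutomaton σ P₁) (G₂ : PositionAutomaton σ P₂) :
    PositionAutomaton σ (P₁ ⊕ P₂) where
  first a := Sum.inl '' G₁.first a ∪ Sum.inr '' G₂.first a
  follow
    | .inl p, a => Sum.inl '' G₁.follow p a
    | .inr p, a => Sum.inr '' G₂.follow p a
  nullable := G₁.nullable ∨ G₂.nullable
  last := Sum.inl '' G₁.last ∪ Sum.inr '' G₂.last
  label := Sum.elim G₁.label G₂.label
  label_of_mem_first := by
    rintro a _ (⟨p, hp, rfl⟩ | ⟨p, hp, rfl⟩)
    exacts [G₁.label_of_mem_first hp, G₂.label_of_mem_first hp]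
  label_of_mem_follow := by
    rintro (q | q) a _ ⟨p, hp, rfl⟩
    exacts [G₁.label_of_mem_follow hp, G₂.label_of_mem_follow hp]

@[simps]
def comp (G₁ : PositionAutomaton σ P₁) (G₂ : PositionAutomaton σ P₂) :
    PositionAutomaton σ (P₁ ⊕ P₂) where
  first a := Sum.inl '' G₁.first a ∪ {x ∈ Sum.inr '' G₂.first a | G₁.nullable}
  follow
    | .inl p, a => Sum.inl '' G₁.follow p a ∪ {x ∈ Sum.inr '' G₂.first a | p ∈ G₁.last}
    | .inr p, a => Sum.inr '' G₂.follow p a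
  nullable := G₁.nullable ∧ G₂.nullable
  last := {x ∈ Sum.inl '' G₁.last | G₂.nullable} ∪ Sum.inr '' G₂.last
  label := Sum.elim G₁.label G₂.label
  label_of_mem_first := by
    rintro a _ (⟨p, hp, rfl⟩ | ⟨⟨p, hp, rfl⟩, -⟩)
    exacts [G₁.label_of_mem_first hp, G₂.label_of_mem_first hp]
  label_of_mem_follow := by
    rintro (q | q) a _ hp
    · rcases hp with ⟨p, hp, rfl⟩ | ⟨⟨p, hp, rfl⟩, -⟩
      exacts [G₁.label_of_mem_follow hp, G₂.label_of_mem_first hp]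
    · obtain ⟨p, hp, rfl⟩ := hp
      exact G₂.label_of_mem_follow hp

@[simps]
def star (G : PositionAutomaton σ P₁) : PositionAutomaton σ P₁ where
  first := G.first
  follow p a := G.follow p a ∪ {x ∈ G.first a | p ∈ G.last}
  nullable := True
  last := G.last
  label := G.label
  label_of_mem_first := G.label_of_mem_first
  label_of_mem_follow := by
    rintro q a p (hp | ⟨hp, -⟩)
    exacts [G.label_of_mem_follow hp, G.label_of_mem_first hp]

theorem lang_zero : (zero : PositionAutomaton σ Empty).lang = 0 :=
  lang_eq_of _ (by simp) (by simp)

theorem lang_one : (one : PositionAutomaton σ Empty).lang = 1 :=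
  lang_eq_of _ (by simp) (by simp)

theorem langFrom_char (a : σ) : (char a).langFrom = fun _ => 1 :=
  langFrom_eq_of _ (by simp) (by simp)

theorem lang_char (a : σ) : (char a).lang = {[a]} := by
  have mem_singleton (w : List σ) : w ∈ ({[a]} : Language σ) ↔ w = [a] := Iff.rfl
  exact lang_eq_of _ (by simp [mem_singleton]) (by simp [mem_singleton, langFrom_char])

variable (G₁ : PositionAutomaton σ P₁) (G₂ : PositionAutomaton σ P₂)

theorem langFrom_plus : (G₁.plus G₂).langFrom = Sum.elim G₁.langFrom G₂.langFrom := by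
  refine langFrom_eq_of _ ?_ ?_
  · rintro (p | p) <;> simp [nil_mem_langFrom]
  · rintro (p | p) a w <;> simp [cons_mem_langFrom]

theorem lang_plus : (G₁.plus G₂).lang = G₁.lang + G₂.lang := by
  refine lang_eq_of _ ?_ fun a w => ?_
  · rw [Language.mem_add, nil_mem_lang, nil_mem_lang, plus_nullable]
  · rw [Language.mem_add, cons_mem_lang, cons_mem_lang, langFrom_plus]
    simp [or_and_right, exists_or]

theorem langFrom_comp :
    (G₁.comp G₂).langFrom = Sum.elim (fun p => G₁.langFrom p * G₂.lang) G₂.langFrom := by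
  refine langFrom_eq_of _ ?_ ?_
  · rintro (p | p) <;> simp [nil_mem_langFrom, Language.mem_mul, nil_mem_lang]
  · rintro (p | p) a w
    · simp only [Sum.elim_inl, Language.cons_mem_mul, nil_mem_langFrom, cons_mem_langFrom,
        cons_mem_lang]
      aesop (add simp Language.mem_mul)
    · simp [cons_mem_langFrom]

theorem lang_comp : (G₁.comp G₂).lang = G₁.lang * G₂.lang := by
  refine lang_eq_of _ (by simp [nil_mem_lang, Language.mem_mul]) fun a w => ?_
  simp only [Language.cons_mem_mul, nil_mem_lang, cons_mem_lang, langFrom_comp]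
  aesop (add simp Language.mem_mul)

theorem langFrom_star : G₁.star.langFrom = fun p => G₁.langFrom p * G₁.lang∗ := by
  refine langFrom_eq_of _ ?_ ?_
  · intro p; simp [nil_mem_langFrom, Language.mem_mul, Language.nil_mem_kstar]
  · intro p a w
    simp only [Language.cons_mem_mul, nil_mem_langFrom, Language.cons_mem_kstar,
      cons_mem_langFrom, cons_mem_lang]
    aesop (add simp Language.mem_mul)

theorem lang_star : G₁.star.lang = G₁.lang∗ := by
  refine lang_eq_of _ (by simp [Language.nil_mem_kstar]) fun a w => ?_
  simp only [Language.cons_mem_kstar, cons_mem_lang, langFrom_star]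
  aesop (add simp Language.mem_mul)

end PositionAutomaton

namespace RegularExpression

variable {σ : Type}

def positions : RegularExpression σ → Type
  | zero | epsilon => Empty
  | char _ => Unit
  | plus r s | comp r s => r.positions ⊕ s.positions
  | star r => r.positions

instance instFinitePositions : (r : RegularExpression σ) → Finite r.positions
  | zero | epsilon => inferInstanceAs (Finite Empty)
  | char _ => inferInstanceAs (Finite Unit)
  | plus r s | comp r s =>
    have := instFinitePositions r
    have := instFinitePositions s
    inferInstanceAs (Finite (r.positions ⊕ s.positions))
  | star r => instFinitePositions r

theorem card_positions (r : RegularExpression σ) : Nat.card r.positions = alphabeticWidth r := by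
  induction r with
  | zero | epsilon => simp [positions, alphabeticWidth]
  | char _ => simp [positions, alphabeticWidth]
  | plus r s ihr ihs | comp r s ihr ihs =>
    rw [alphabeticWidth, ← ihr, ← ihs]
    exact Nat.card_sum
  | star r ihr => exact ihr

def glushkov : (r : RegularExpression σ) → PositionAutomaton σ r.positions
  | zero => .zero
  | epsilon => .one
  | char a => .char a
  | plus r s => r.glushkov.plus s.glushkov
  | comp r s => r.glushkov.comp s.glushkov
  | star r => r.glushkov.star

theorem lang_glushkov (r : RegularExpression σ) : r.glushkov.lang = r.matches' := by
  induction r with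
  | zero => exact PositionAutomaton.lang_zero
  | epsilon => exact PositionAutomaton.lang_one
  | char a => exact PositionAutomaton.lang_char a
  | plus r s ihr ihs => exact (r.glushkov.lang_plus s.glushkov).trans (by rw [ihr, ihs]; rfl)
  | comp r s ihr ihs => exact (r.glushkov.lang_comp s.glushkov).trans (by rw [ihr, ihs]; rfl)
  | star r ihr => exact r.glushkov.lang_star.trans (by rw [ihr]; rfl)

end RegularExpression

theorem regex_to_nfa_remembering_last_symbol_general (σ : Type)
    (r : RegularExpression σ) :
    ∃ (Q : Type) (_ : Fintype Q) (A : NFA σ Q) (q₀ : Q) (Qa : σ → Set Q),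
      Fintype.card Q = alphabeticWidth r + 1 ∧
      A.accepts = r.matches' ∧
      A.start = {q₀} ∧
      (∀ q a, q₀ ∉ A.step q a) ∧
      (∀ a b, a ≠ b → Disjoint (Qa a) (Qa b)) ∧
      (∀ a, q₀ ∉ Qa a) ∧
      (∀ q : Q, q ≠ q₀ → ∃ a, q ∈ Qa a) ∧
      (∀ q a, A.step q a ⊆ Qa a) := by
  have := Fintype.ofFinite r.positions
  refine ⟨Option r.positions, inferInstance, r.glushkov.toNFA, none,
    fun a => some '' (r.glushkov.label ⁻¹' {a}), ?_, r.lang_glushkov, rfl,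
    fun q a h => ?_, fun a b hab => ?_, by simp, fun q hq => ?_,
    r.glushkov.toNFA_step_subset⟩
  · rw [Fintype.card_option, Fintype.card_eq_nat_card, r.card_positions]
  · simpa using r.glushkov.toNFA_step_subset q a h
  · exact (Set.disjoint_image_iff (Option.some_injective _)).2
      ((Set.disjoint_singleton.2 hab).preimage _)
  · obtain ⟨p, rfl⟩ := Option.ne_none_iff_exists'.1 hq
    exact ⟨_, p, rfl, rfl⟩

theorem regex_to_nfa_remembering_last_symbol (σ : Type) [Fintype σ]
    (r : RegularExpression σ) (hr : 1 ≤ alphabeticWidth r) :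
    ∃ (Q : Type) (_ : Fintype Q) (A : NFA σ Q) (q₀ : Q) (Qa : σ → Set Q),
      Fintype.card Q = alphabeticWidth r + 1 ∧
      A.accepts = r.matches' ∧
      A.start = {q₀} ∧
      (∀ q a, q₀ ∉ A.step q a) ∧
      (∀ a b, a ≠ b → Disjoint (Qa a) (Qa b)) ∧
      (∀ a, q₀ ∉ Qa a) ∧
      (∀ q : Q, q ≠ q₀ → ∃ a, q ∈ Qa a) ∧
      (∀ q a, A.step q a ⊆ Qa a) :=
  regex_to_nfa_remembering_last_symbol_general σ r
end
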